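/- arXiv:0802.3432 — 10 statements merged into one kernel-verified Lean document; each statement's English description precedes it below -/
import Mathlib

section
/- For all n, m ≥ 0 with n ≠ m one has σ(U_n V_m) = 0, and for every n ≥ 0 one has σ(U_n V_n) = κ_n(1 − ξ_n); in particular, for n ≥ 1, σ(U_n V_n) = (κ_n/κ_{n−1})(κ_{n−1} − κ_n), and σ(U_0 V_0) = κ_0. -/
open Polynomial

/-- `Apoly a n = ∏_{k=1}^n (z - a_k)`. -/
noncomputable def Apoly (a : ℕ → ℂ) (n : ℕ) : Polynomial ℂ :=
  ∏ k ∈ Finset.range n, (X - C (a (k + 1)))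

/-- `ξ_0 = 0`, `ξ_n = κ_n / κ_{n-1}` for `n ≥ 1`. -/
noncomputable def xiSeq (κ : ℕ → ℂ) (n : ℕ) : ℂ :=
  if n = 0 then 0 else κ n / κ (n - 1)

/-- `U_0 = 1`, `U_n = P_n/A_n - ξ_n P_{n-1}/A_{n-1}` as rational functions
(with poles `a_1, …, a_n`); the same construction with the `b`'s yields `V_n`. -/
noncomputable def Ufun (P : ℕ → Polynomial ℂ) (a : ℕ → ℂ) (κ : ℕ → ℂ) :
    ℕ → RatFunc ℂ
  | 0 => 1
  | n + 1 =>
      algebraMap (Polynomial ℂ) (RatFunc ℂ) (P (n + 1)) /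
          algebraMap (Polynomial ℂ) (RatFunc ℂ) (Apoly a (n + 1)) -
        algebraMap ℂ (RatFunc ℂ) (xiSeq κ (n + 1)) *
          (algebraMap (Polynomial ℂ) (RatFunc ℂ) (P n) /
            algebraMap (Polynomial ℂ) (RatFunc ℂ) (Apoly a n))

/-- The rational function `P_n / A_n`. -/
noncomputable def Ffun (P : ℕ → Polynomial ℂ) (a : ℕ → ℂ) (n : ℕ) : RatFunc ℂ :=
  algebraMap (Polynomial ℂ) (RatFunc ℂ) (P n) /
    algebraMap (Polynomial ℂ) (RatFunc ℂ) (Apoly a n)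

lemma Apoly_monic (a : ℕ → ℂ) (n : ℕ) : (Apoly a n).Monic :=
  monic_prod_of_monic _ _ fun _ _ => monic_X_sub_C _

lemma Apoly_natDegree (a : ℕ → ℂ) (n : ℕ) : (Apoly a n).natDegree = n := by
  rw [Apoly, natDegree_prod_of_monic _ _ (fun _ _ => monic_X_sub_C _)]
  simp

lemma Ufun_eq (P : ℕ → Polynomial ℂ) (a : ℕ → ℂ) (κ : ℕ → ℂ) (hP0 : P 0 = 1) (n : ℕ) :
    Ufun P a κ n = Ffun P a n -
      algebraMap ℂ (RatFunc ℂ) (xiSeq κ n) * Ffun P a (n - 1) := by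
  cases n with
  | zero =>
      simp [Ufun, Ffun, xiSeq, hP0, Apoly]
  | succ n => rfl

lemma key_max (a b : ℕ → ℂ) (P : ℕ → Polynomial ℂ) (κ : ℕ → ℂ)
    (σ : RatFunc ℂ →ₗ[ℂ] ℂ)
    (hPmonic : ∀ n, (P n).Monic) (hPdeg : ∀ n, (P n).natDegree = n)
    (hσ : ∀ (n : ℕ) (q : Polynomial ℂ), q.degree ≤ (n : ℕ) →
      σ (algebraMap (Polynomial ℂ) (RatFunc ℂ) (P n * q) /
          algebraMap (Polynomial ℂ) (RatFunc ℂ) (Apoly a n * Apoly b n)) =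
        q.coeff n * κ n) (n m : ℕ) :
    σ (Ffun P a n * Ffun P b m) = κ (max n m) := by
  rcases le_total m n with h | h
  · -- n ≥ m
    obtain ⟨k, rfl⟩ := Nat.exists_eq_add_of_le h
    rw [Nat.max_eq_left (Nat.le_add_right m k)]
    set T : Polynomial ℂ := ∏ j ∈ Finset.range k, (X - C (b (m + j + 1))) with hTdef
    have hT : Apoly b (m + k) = Apoly b m * T := by
      rw [Apoly, Finset.prod_range_add]; rfl
    have hTmonic : T.Monic := monic_prod_of_monic _ _ fun _ _ => monic_X_sub_C _
    have hTdeg : T.natDegree = k := by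
      rw [hTdef, natDegree_prod_of_monic _ _ (fun _ _ => monic_X_sub_C _)]; simp
    have hq : (P m * T).Monic := (hPmonic m).mul hTmonic
    have hqdeg : (P m * T).natDegree = m + k := by
      rw [(hPmonic m).natDegree_mul hTmonic, hPdeg, hTdeg]
    have ha1 := RatFunc.algebraMap_ne_zero (Apoly_monic a (m + k)).ne_zero
    have hb1 := RatFunc.algebraMap_ne_zero (Apoly_monic b m).ne_zero
    have hb2 := RatFunc.algebraMap_ne_zero hTmonic.ne_zero
    have heq : Ffun P a (m + k) * Ffun P b m =
        algebraMap (Polynomial ℂ) (RatFunc ℂ) (P (m + k) * (P m * T)) /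
          algebraMap (Polynomial ℂ) (RatFunc ℂ) (Apoly a (m + k) * Apoly b (m + k)) := by
      rw [hT]
      simp only [Ffun, map_mul]
      field_simp
    rw [heq, hσ (m + k) (P m * T) (by rw [← hqdeg]; exact degree_le_natDegree),
      ← hqdeg, hq.coeff_natDegree, one_mul]
  · -- m ≥ n
    obtain ⟨k, rfl⟩ := Nat.exists_eq_add_of_le h
    rw [Nat.max_eq_right (Nat.le_add_right n k)]
    set T : Polynomial ℂ := ∏ j ∈ Finset.range k, (X - C (a (n + j + 1))) with hTdef
    have hT : Apoly a (n + k) = Apoly a n * T := by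
      rw [Apoly, Finset.prod_range_add]; rfl
    have hTmonic : T.Monic := monic_prod_of_monic _ _ fun _ _ => monic_X_sub_C _
    have hTdeg : T.natDegree = k := by
      rw [hTdef, natDegree_prod_of_monic _ _ (fun _ _ => monic_X_sub_C _)]; simp
    have hq : (P n * T).Monic := (hPmonic n).mul hTmonic
    have hqdeg : (P n * T).natDegree = n + k := by
      rw [(hPmonic n).natDegree_mul hTmonic, hPdeg, hTdeg]
    have ha1 := RatFunc.algebraMap_ne_zero (Apoly_monic b (n + k)).ne_zero
    have hb1 := RatFunc.algebraMap_ne_zero (Apoly_monic a n).ne_zero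
    have hb2 := RatFunc.algebraMap_ne_zero hTmonic.ne_zero
    have heq : Ffun P a n * Ffun P b (n + k) =
        algebraMap (Polynomial ℂ) (RatFunc ℂ) (P (n + k) * (P n * T)) /
          algebraMap (Polynomial ℂ) (RatFunc ℂ) (Apoly a (n + k) * Apoly b (n + k)) := by
      rw [hT]
      simp only [Ffun, map_mul]
      field_simp
    rw [heq, hσ (n + k) (P n * T) (by rw [← hqdeg]; exact degree_le_natDegree),
      ← hqdeg, hq.coeff_natDegree, one_mul]

/-- Biorthogonality of the rational functions `U_n`, `V_m` with respect to the
functional `σ`, together with the values of the normalization constants. -/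
theorem stmt1 (a b : ℕ → ℂ) (P : ℕ → Polynomial ℂ) (κ : ℕ → ℂ)
    (σ : RatFunc ℂ →ₗ[ℂ] ℂ)
    (hP0 : P 0 = 1) (hPmonic : ∀ n, (P n).Monic) (hPdeg : ∀ n, (P n).natDegree = n)
    (hκ : ∀ n, κ n ≠ 0)
    (hσ : ∀ (n : ℕ) (q : Polynomial ℂ), q.degree ≤ (n : ℕ) →
      σ (algebraMap (Polynomial ℂ) (RatFunc ℂ) (P n * q) /
          algebraMap (Polynomial ℂ) (RatFunc ℂ) (Apoly a n * Apoly b n)) =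
        q.coeff n * κ n) :
    (∀ n m, n ≠ m → σ (Ufun P a κ n * Ufun P b κ m) = 0) ∧
      (∀ n, σ (Ufun P a κ n * Ufun P b κ n) = κ n * (1 - xiSeq κ n)) ∧
      σ (Ufun P a κ 0 * Ufun P b κ 0) = κ 0 ∧
      (∀ n, 1 ≤ n → σ (Ufun P a κ n * Ufun P b κ n) =
        κ n / κ (n - 1) * (κ (n - 1) - κ n)) := by
  have key := key_max a b P κ σ hPmonic hPdeg hσ
  have expand : ∀ n m, σ (Ufun P a κ n * Ufun P b κ m) =
      κ (max n m) - xiSeq κ m * κ (max n (m - 1)) - xiSeq κ n * κ (max (n - 1) m)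
        + xiSeq κ n * xiSeq κ m * κ (max (n - 1) (m - 1)) := by
    intro n m
    rw [Ufun_eq P a κ hP0 n, Ufun_eq P b κ hP0 m]
    set cn := xiSeq κ n
    set cm := xiSeq κ m
    have hprod : (Ffun P a n - algebraMap ℂ (RatFunc ℂ) cn * Ffun P a (n - 1)) *
        (Ffun P b m - algebraMap ℂ (RatFunc ℂ) cm * Ffun P b (m - 1)) =
        Ffun P a n * Ffun P b m - cm • (Ffun P a n * Ffun P b (m - 1))
          - cn • (Ffun P a (n - 1) * Ffun P b m)
          + (cn * cm) • (Ffun P a (n - 1) * Ffun P b (m - 1)) := by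
      simp only [Algebra.smul_def, map_mul]
      ring
    rw [hprod, map_add, map_sub, map_sub, LinearMap.map_smul, LinearMap.map_smul,
      LinearMap.map_smul, key, key, key, key, smul_eq_mul, smul_eq_mul, smul_eq_mul]
  have hξ : ∀ n : ℕ, 1 ≤ n → xiSeq κ n * κ (n - 1) = κ n := by
    intro n hn
    rw [xiSeq, if_neg (by omega)]
    exact div_mul_cancel₀ _ (hκ (n - 1))
  have part1 : ∀ n m, n ≠ m → σ (Ufun P a κ n * Ufun P b κ m) = 0 := by
    intro n m hnm
    rcases Nat.lt_or_ge n m with h | h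
    · -- n < m
      rw [expand n m, Nat.max_eq_right h.le, Nat.max_eq_right (by omega : n ≤ m - 1),
        Nat.max_eq_right (by omega : n - 1 ≤ m), Nat.max_eq_right (by omega : n - 1 ≤ m - 1)]
      have := hξ m (by omega)
      linear_combination (xiSeq κ n - 1) * this
    · have h' : m < n := by omega
      rw [expand n m, Nat.max_eq_left h'.le, Nat.max_eq_left (by omega : m - 1 ≤ n),
        Nat.max_eq_left (by omega : m ≤ n - 1), Nat.max_eq_left (by omega : m - 1 ≤ n - 1)]
      have := hξ n (by omega)
      linear_combination (xiSeq κ m - 1) * this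
  have part2 : ∀ n, σ (Ufun P a κ n * Ufun P b κ n) = κ n * (1 - xiSeq κ n) := by
    intro n
    rcases Nat.eq_zero_or_pos n with rfl | hn
    · rw [expand 0 0]
      simp [xiSeq]
    · rw [expand n n, Nat.max_self, Nat.max_eq_left (by omega : n - 1 ≤ n),
        Nat.max_eq_right (by omega : n - 1 ≤ n), Nat.max_self]
      have := hξ n hn
      linear_combination xiSeq κ n * this
  refine ⟨part1, part2, ?_, ?_⟩
  · rw [part2 0]; simp [xiSeq]
  · intro n hn
    rw [part2 n, xiSeq, if_neg (by omega)]
    have h1 : κ n / κ (n - 1) * (κ (n - 1) - κ n) = κ n - κ n / κ (n - 1) * κ n := by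
      rw [mul_sub, div_mul_cancel₀ _ (hκ (n - 1))]
    rw [h1]
    ring
end

section
/- Assume in addition that Δ_k ≠ 0 for all k ≥ 1. Then for every n ≥ 0 one has σ(U_n V_n) = (Δ_{n+1}/Δ_n) · P_n(a_n) · P_n(b_n) (for n = 0 read P_0(a_0) = P_0(b_0) = 1). -/
open Polynomial

/-- Moments `c_{nm} = σ(1/(A_n B_m))`. -/
noncomputable def momC (σ : RatFunc ℂ →ₗ[ℂ] ℂ) (a b : ℕ → ℂ) (n m : ℕ) : ℂ :=
  σ (1 / algebraMap (Polynomial ℂ) (RatFunc ℂ) (Apoly a n * Apoly b m))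

/-- `Δ_0 = 1`, `Δ_n = det (c_{ij})_{0 ≤ i,j ≤ n-1}`. -/
noncomputable def DeltaDet (σ : RatFunc ℂ →ₗ[ℂ] ℂ) (a b : ℕ → ℂ) (n : ℕ) : ℂ :=
  Matrix.det (Matrix.of fun i j : Fin n => momC σ a b (i : ℕ) (j : ℕ))

/-!
Dividing by `z - a_n` peels the term `p(a_n)/A_n` off `p/A_n` (for `deg p ≤ n`), so
`U_n = ∑_{i ≤ n} u_i / A_i` with `u_n = P_n(a_n)`, and likewise `V_n = ∑_{j ≤ n} v_j / B_j` with
`v_n = P_n(b_n)`. Orthogonality gives `σ(U_n / B_j) = 0` for `j < n`: the row vector `u` times the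
moment matrix `(c_{ij})_{i,j ≤ n}` is `s e_n` with `s = σ(U_n / B_n)`. Hence `σ(U_n V_n) = v_n s`,
while Cramer's rule (the `(n, n)` entry of the adjugate) gives `s Δ_n = u_n Δ_{n+1}`.
-/

open Matrix

local notation "ι" => algebraMap ℂ[X] (RatFunc ℂ)

theorem Matrix.mul_det_submatrix_castSucc_eq_of_vecMul_eq_single {R : Type*} [CommRing R]
    {m : ℕ} (M : Matrix (Fin (m + 1)) (Fin (m + 1)) R) (u : Fin (m + 1) → R) (s : R)
    (h : u ᵥ* M = Pi.single (Fin.last m) s) :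
    s * (M.submatrix Fin.castSucc Fin.castSucc).det = u (Fin.last m) * M.det := by
  have h' := congrFun (congrArg (· ᵥ* M.adjugate) h) (Fin.last m)
  simp only [vecMul_vecMul, mul_adjugate, vecMul_smul, vecMul_one, single_vecMul, Pi.smul_apply,
    row_apply, smul_eq_mul, adjugate_fin_succ_eq_det_submatrix, Fin.succAbove_last] at h'
  rw [← two_mul, pow_mul, neg_one_sq, one_pow, one_mul] at h'
  rw [← h', mul_comm]

theorem Apoly_succ (a : ℕ → ℂ) (n : ℕ) : Apoly a (n + 1) = Apoly a n * (X - C (a (n + 1))) :=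
  Finset.prod_range_succ _ _

theorem algebraMap_C_eq_smul_one (c : ℂ) : ι (C c) = c • (1 : RatFunc ℂ) := by
  rw [Algebra.smul_def, mul_one, IsScalarTower.algebraMap_apply ℂ ℂ[X] (RatFunc ℂ),
    Polynomial.algebraMap_eq]

theorem exists_div_Apoly_eq_sum (a : ℕ → ℂ) : ∀ (n : ℕ) (p : ℂ[X]), p.natDegree ≤ n →
    ∃ c : Fin (n + 1) → ℂ, c (Fin.last n) = p.eval (a n) ∧
      ι p / ι (Apoly a n) = ∑ i, c i • (ι (Apoly a i))⁻¹
  | 0, p, hp => by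
    obtain ⟨c, rfl⟩ : ∃ c, p = C c := ⟨_, eq_C_of_natDegree_le_zero hp⟩
    refine ⟨fun _ => c, (eval_C).symm, ?_⟩
    rw [algebraMap_C_eq_smul_one, Fin.sum_univ_one]
    simp [Apoly]
  | n + 1, p, hp => by
    set q := p /ₘ (X - C (a (n + 1)))
    have hq : q.natDegree ≤ n := by
      rw [natDegree_divByMonic _ (monic_X_sub_C _), natDegree_X_sub_C]; omega
    have hpq : p = q * (X - C (a (n + 1))) + C (p.eval (a (n + 1))) := by
      conv_lhs => rw [← modByMonic_add_div p (X - C (a (n + 1)))]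
      rw [modByMonic_X_sub_C_eq_C_eval, add_comm, mul_comm]
    have hX : ι (X - C (a (n + 1))) ≠ 0 := RatFunc.algebraMap_ne_zero (X_sub_C_ne_zero _)
    have hsplit : ι p / ι (Apoly a (n + 1)) =
        ι q / ι (Apoly a n) + p.eval (a (n + 1)) • (ι (Apoly a (n + 1)))⁻¹ := by
      conv_lhs => rw [hpq]
      rw [Apoly_succ, map_add, map_mul, map_mul, add_div, mul_div_mul_right _ _ hX,
        algebraMap_C_eq_smul_one, smul_div_assoc, one_div]
    obtain ⟨c, -, hc⟩ := exists_div_Apoly_eq_sum a n q hq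
    refine ⟨Fin.snoc c (p.eval (a (n + 1))), Fin.snoc_last _ _, ?_⟩
    rw [hsplit, hc, Fin.sum_univ_castSucc (n := n + 1)]
    simp only [Fin.snoc_castSucc, Fin.snoc_last, Fin.val_castSucc, Fin.val_last]

theorem Apoly_mul_prod_Ico (a : ℕ → ℂ) {j n : ℕ} (h : j ≤ n) :
    Apoly a j * ∏ k ∈ Finset.Ico j n, (X - C (a (k + 1))) = Apoly a n :=
  Finset.prod_range_mul_prod_Ico _ h

theorem sigma_div_Apoly_mul_inv_Apoly {a b : ℕ → ℂ} {P : ℕ → ℂ[X]} {κ : ℕ → ℂ}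
    {σ : RatFunc ℂ →ₗ[ℂ] ℂ}
    (hσ : ∀ (n : ℕ) (q : ℂ[X]), q.degree ≤ (n : ℕ) →
      σ (ι (P n * q) / ι (Apoly a n * Apoly b n)) = q.coeff n * κ n)
    {n j : ℕ} (hj : j ≤ n) :
    σ (ι (P n) / ι (Apoly a n) * (ι (Apoly b j))⁻¹) = if j = 0 then κ n else 0 := by
  set q := ∏ k ∈ Finset.Ico j n, (X - C (b (k + 1)))
  have hq_monic : q.Monic := monic_prod_of_monic _ _ fun _ _ => monic_X_sub_C _
  have hq_deg : q.natDegree = n - j := by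
    rw [natDegree_prod_of_monic _ _ fun _ _ => monic_X_sub_C _]
    simp
  have hrw : ι (P n) / ι (Apoly a n) * (ι (Apoly b j))⁻¹ =
      ι (P n * q) / ι (Apoly a n * Apoly b n) := by
    have hBn : Apoly b j * q = Apoly b n := Apoly_mul_prod_Ico b hj
    rw [← hBn, map_mul, map_mul, map_mul, ← mul_assoc,
      mul_div_mul_right _ _ (RatFunc.algebraMap_ne_zero hq_monic.ne_zero), div_mul_eq_div_div,
      div_eq_mul_inv _ (ι (Apoly b j))]
  rw [hrw, hσ n q (natDegree_le_iff_degree_le.mp (by omega))]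
  split_ifs with hj0
  · subst hj0
    rw [← Nat.sub_zero n, ← hq_deg, hq_monic.coeff_natDegree, one_mul]
  · rw [coeff_eq_zero_of_natDegree_lt (by omega), zero_mul]

theorem Ufun_succ (P : ℕ → ℂ[X]) (a κ : ℕ → ℂ) (n : ℕ) :
    Ufun P a κ (n + 1) = ι (P (n + 1)) / ι (Apoly a (n + 1)) -
      xiSeq κ (n + 1) • (ι (P n) / ι (Apoly a n)) := by
  rw [Algebra.smul_def]
  rfl

theorem sigma_Ufun_mul_inv_Apoly_eq_zero {a b : ℕ → ℂ} {P : ℕ → ℂ[X]} {κ : ℕ → ℂ}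
    {σ : RatFunc ℂ →ₗ[ℂ] ℂ} (hκ : ∀ n, κ n ≠ 0)
    (hσ : ∀ (n : ℕ) (q : ℂ[X]), q.degree ≤ (n : ℕ) →
      σ (ι (P n * q) / ι (Apoly a n * Apoly b n)) = q.coeff n * κ n)
    {n j : ℕ} (hj : j < n) :
    σ (Ufun P a κ n * (ι (Apoly b j))⁻¹) = 0 := by
  obtain ⟨m, rfl⟩ : ∃ m, n = m + 1 := ⟨n - 1, by omega⟩
  rw [Ufun_succ, sub_mul, smul_mul_assoc, map_sub, map_smul,
    sigma_div_Apoly_mul_inv_Apoly hσ (by omega), sigma_div_Apoly_mul_inv_Apoly hσ (by omega),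
    xiSeq, if_neg m.succ_ne_zero, Nat.add_sub_cancel]
  split_ifs
  · rw [smul_eq_mul, div_mul_cancel₀ _ (hκ m), sub_self]
  · rw [smul_zero, sub_zero]

theorem exists_Ufun_eq_sum {P : ℕ → ℂ[X]} (a κ : ℕ → ℂ) (hP0 : P 0 = 1)
    (hPdeg : ∀ n, (P n).natDegree ≤ n) (n : ℕ) :
    ∃ u : Fin (n + 1) → ℂ, u (Fin.last n) = (P n).eval (a n) ∧
      Ufun P a κ n = ∑ i, u i • (ι (Apoly a i))⁻¹ := by
  cases n with
  | zero => exact ⟨fun _ => 1, by simp [hP0], by simp [Ufun, Apoly]⟩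
  | succ m =>
    obtain ⟨c, hc_last, hc⟩ := exists_div_Apoly_eq_sum a (m + 1) (P (m + 1)) (hPdeg _)
    obtain ⟨d, -, hd⟩ := exists_div_Apoly_eq_sum a m (P m) (hPdeg _)
    refine ⟨c - xiSeq κ (m + 1) • Fin.snoc d 0, by simp [hc_last], ?_⟩
    rw [Ufun_succ, hc, hd]
    simp only [Pi.sub_apply, Pi.smul_apply, sub_smul, Finset.sum_sub_distrib, smul_eq_mul,
      mul_smul, ← Finset.smul_sum]
    congr 2
    rw [Fin.sum_univ_castSucc (n := m + 1)]
    simp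

noncomputable def momentMatrix (σ : RatFunc ℂ →ₗ[ℂ] ℂ) (a b : ℕ → ℂ) (n : ℕ) :
    Matrix (Fin n) (Fin n) ℂ :=
  Matrix.of fun i j => momC σ a b i j

theorem DeltaDet_eq_det (σ : RatFunc ℂ →ₗ[ℂ] ℂ) (a b : ℕ → ℂ) (n : ℕ) :
    DeltaDet σ a b n = (momentMatrix σ a b n).det :=
  rfl

theorem momentMatrix_submatrix_castSucc (σ : RatFunc ℂ →ₗ[ℂ] ℂ) (a b : ℕ → ℂ) (n : ℕ) :
    (momentMatrix σ a b (n + 1)).submatrix Fin.castSucc Fin.castSucc = momentMatrix σ a b n :=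
  rfl

theorem sigma_sum_mul_inv_Apoly_eq_vecMul (σ : RatFunc ℂ →ₗ[ℂ] ℂ) (a b : ℕ → ℂ) {n : ℕ}
    (u : Fin n → ℂ) (j : Fin n) :
    σ ((∑ i, u i • (ι (Apoly a i))⁻¹) * (ι (Apoly b j))⁻¹) = (u ᵥ* momentMatrix σ a b n) j := by
  simp only [Finset.sum_mul, map_sum, smul_mul_assoc, map_smul, smul_eq_mul, vecMul, dotProduct,
    momentMatrix, of_apply, momC, one_div, map_mul, mul_inv]

theorem DeltaDet_ne_zero {σ : RatFunc ℂ →ₗ[ℂ] ℂ} {a b : ℕ → ℂ}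
    (hΔ : ∀ k, 1 ≤ k → DeltaDet σ a b k ≠ 0) (n : ℕ) : DeltaDet σ a b n ≠ 0 := by
  rcases n with _ | n
  · simp [DeltaDet]
  · exact hΔ _ n.succ_pos

theorem stmt2_general (a b : ℕ → ℂ) (P : ℕ → Polynomial ℂ) (κ : ℕ → ℂ)
    (σ : RatFunc ℂ →ₗ[ℂ] ℂ)
    (hP0 : P 0 = 1) (hPdeg : ∀ n, (P n).natDegree = n)
    (hκ : ∀ n, κ n ≠ 0)
    (hσ : ∀ (n : ℕ) (q : Polynomial ℂ), q.degree ≤ (n : ℕ) →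
      σ (algebraMap (Polynomial ℂ) (RatFunc ℂ) (P n * q) /
          algebraMap (Polynomial ℂ) (RatFunc ℂ) (Apoly a n * Apoly b n)) =
        q.coeff n * κ n)
    (hΔ : ∀ k, 1 ≤ k → DeltaDet σ a b k ≠ 0) :
    ∀ n : ℕ, σ (Ufun P a κ n * Ufun P b κ n) =
      DeltaDet σ a b (n + 1) / DeltaDet σ a b n *
        ((P n).eval (a n) * (P n).eval (b n)) := by
  intro n
  obtain ⟨u, hu_last, hU⟩ := exists_Ufun_eq_sum a κ hP0 (fun n => (hPdeg n).le) n
  obtain ⟨v, hv_last, hV⟩ := exists_Ufun_eq_sum b κ hP0 (fun n => (hPdeg n).le) n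
  set s := σ (Ufun P a κ n * (ι (Apoly b n))⁻¹)
  have hcol : ∀ j : Fin (n + 1),
      σ (Ufun P a κ n * (ι (Apoly b j))⁻¹) = (Pi.single (Fin.last n) s : Fin (n + 1) → ℂ) j := by
    intro j
    rcases eq_or_ne j (Fin.last n) with rfl | hj
    · simp [s]
    · rw [Pi.single_eq_of_ne hj,
        sigma_Ufun_mul_inv_Apoly_eq_zero hκ hσ (Fin.val_lt_last hj)]
  have hrow : u ᵥ* momentMatrix σ a b (n + 1) = Pi.single (Fin.last n) s := by
    funext j
    rw [← sigma_sum_mul_inv_Apoly_eq_vecMul, ← hU, hcol]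
  have hUV : σ (Ufun P a κ n * Ufun P b κ n) = v (Fin.last n) * s := by
    simp only [hV, Finset.mul_sum, mul_smul_comm, map_sum, map_smul, smul_eq_mul, hcol]
    exact dotProduct_single (v := v) s (Fin.last n)
  have hcramer := Matrix.mul_det_submatrix_castSucc_eq_of_vecMul_eq_single _ u s hrow
  rw [momentMatrix_submatrix_castSucc, ← DeltaDet_eq_det, ← DeltaDet_eq_det] at hcramer
  rw [hUV, ← hu_last, ← hv_last, div_mul_eq_mul_div, eq_div_iff (DeltaDet_ne_zero hΔ n)]
  linear_combination v (Fin.last n) * hcramer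

/-- Determinantal formula for the biorthogonality normalization constants:
`σ(U_n V_n) = (Δ_{n+1}/Δ_n) P_n(a_n) P_n(b_n)`. -/
theorem stmt2 (a b : ℕ → ℂ) (P : ℕ → Polynomial ℂ) (κ : ℕ → ℂ)
    (σ : RatFunc ℂ →ₗ[ℂ] ℂ)
    (hP0 : P 0 = 1) (hPmonic : ∀ n, (P n).Monic) (hPdeg : ∀ n, (P n).natDegree = n)
    (hκ : ∀ n, κ n ≠ 0)
    (hσ : ∀ (n : ℕ) (q : Polynomial ℂ), q.degree ≤ (n : ℕ) →
      σ (algebraMap (Polynomial ℂ) (RatFunc ℂ) (P n * q) /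
          algebraMap (Polynomial ℂ) (RatFunc ℂ) (Apoly a n * Apoly b n)) =
        q.coeff n * κ n)
    (hΔ : ∀ k, 1 ≤ k → DeltaDet σ a b k ≠ 0) :
    ∀ n : ℕ, σ (Ufun P a κ n * Ufun P b κ n) =
      DeltaDet σ a b (n + 1) / DeltaDet σ a b n *
        ((P n).eval (a n) * (P n).eval (b n)) :=
  stmt2_general a b P κ σ hP0 hPdeg hκ hσ hΔ
end

section
/- Assume κ_n ≠ 0 for all n ≥ 0, κ_n ≠ κ_{n−1} for all n ≥ 1, and a_n ≠ b_n for all n ≥ 1. Then for every n ≥ 1 the polynomial identities S_{n+1}(z) = ν_n^{(1)}(z − b_n)S_n(z) + ν_n^{(2)}(z − a_n)T_n(z) and T_{n+1}(z) = ν_n^{(3)}(z − b_n)S_n(z) + ν_n^{(4)}(z − a_n)T_n(z) hold, where ν_n^{(1)} = (ξ_n β_n − ξ_n ξ_{n+1} a_{n+1} − r_n a_n)/(r_n(b_n − a_n)), ν_n^{(2)} = (ξ_n β_n − ξ_n ξ_{n+1} a_{n+1} − r_n b_n)/(r_n(a_n − b_n)), ν_n^{(3)} = (ξ_n β_n − ξ_n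 ξ_{n+1} b_{n+1} − r_n a_n)/(r_n(b_n − a_n)), ν_n^{(4)} = (ξ_n β_n − ξ_n ξ_{n+1} b_{n+1} − r_n b_n)/(r_n(a_n − b_n)); moreover ν_n^{(1)} + ν_n^{(2)} = ν_n^{(3)} + ν_n^{(4)} = 1. -/
open Polynomial

/-- First-order recurrence relations for the monic polynomials `S_n`, `T_n`
built from the `R_{II}`-type polynomials `P_n`. -/
theorem stmt4 (a b β r α κ ξ : ℕ → ℂ) (P S T : ℕ → Polynomial ℂ)
    (ν₁ ν₂ ν₃ ν₄ : ℕ → ℂ)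
    (hr : ∀ n, 1 ≤ n → r n ≠ 0)
    (hα0 : α 0 = -1) (hα : ∀ n, 1 ≤ n → α n = -(1 + r n))
    (hP0 : P 0 = 1) (hP1 : P 1 = X - C (β 0))
    (hPrec : ∀ n, 1 ≤ n →
      P (n + 1) + (C (α n) * X + C (β n)) * P n +
        C (r n) * (X - C (a n)) * (X - C (b n)) * P (n - 1) = 0)
    (hκrec : ∀ n, 1 ≤ n → κ (n + 1) + α n * κ n + r n * κ (n - 1) = 0)
    (hκ0 : ∀ n, κ n ≠ 0) (hκne : ∀ n, 1 ≤ n → κ n ≠ κ (n - 1))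
    (hab : ∀ n, 1 ≤ n → a n ≠ b n)
    (hξ : ∀ n, 1 ≤ n → ξ n = κ n / κ (n - 1))
    (hS : ∀ n, 1 ≤ n →
      S n = C (1 - ξ n)⁻¹ * (P n - C (ξ n) * (X - C (a n)) * P (n - 1)))
    (hT : ∀ n, 1 ≤ n →
      T n = C (1 - ξ n)⁻¹ * (P n - C (ξ n) * (X - C (b n)) * P (n - 1)))
    (hν₁ : ∀ n, 1 ≤ n → ν₁ n =
      (ξ n * β n - ξ n * ξ (n + 1) * a (n + 1) - r n * a n) / (r n * (b n - a n)))
    (hν₂ : ∀ n, 1 ≤ n → ν₂ n =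
      (ξ n * β n - ξ n * ξ (n + 1) * a (n + 1) - r n * b n) / (r n * (a n - b n)))
    (hν₃ : ∀ n, 1 ≤ n → ν₃ n =
      (ξ n * β n - ξ n * ξ (n + 1) * b (n + 1) - r n * a n) / (r n * (b n - a n)))
    (hν₄ : ∀ n, 1 ≤ n → ν₄ n =
      (ξ n * β n - ξ n * ξ (n + 1) * b (n + 1) - r n * b n) / (r n * (a n - b n))) :
    ∀ n, 1 ≤ n →
      S (n + 1) = C (ν₁ n) * (X - C (b n)) * S n + C (ν₂ n) * (X - C (a n)) * T n ∧
      T (n + 1) = C (ν₃ n) * (X - C (b n)) * S n + C (ν₄ n) * (X - C (a n)) * T n ∧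
      ν₁ n + ν₂ n = 1 ∧ ν₃ n + ν₄ n = 1 := by
  intro n hn
  have hrn : r n ≠ 0 := hr n hn
  have hκn : κ n ≠ 0 := hκ0 n
  have hκm : κ (n - 1) ≠ 0 := hκ0 (n - 1)
  have hξn : ξ n = κ n / κ (n - 1) := hξ n hn
  have hξ0 : ξ n ≠ 0 := by rw [hξn]; exact div_ne_zero hκn hκm
  have hu : 1 - ξ n ≠ 0 := by
    rw [hξn]
    intro h
    apply hκne n hn
    exact (div_eq_one_iff_eq hκm).mp (sub_eq_zero.mp h).symm
  have hba : b n - a n ≠ 0 := sub_ne_zero_of_ne (Ne.symm (hab n hn))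
  have hab0 : a n - b n ≠ 0 := sub_ne_zero_of_ne (hab n hn)
  have hκrec' : κ (n + 1) = (1 + r n) * κ n - r n * κ (n - 1) := by
    have h := hκrec n hn
    rw [hα n hn] at h
    linear_combination h
  have hξ'eq : ξ (n + 1) = ((1 + r n) * ξ n - r n) / ξ n := by
    have h := hξ (n + 1) (by omega)
    simp only [Nat.add_sub_cancel] at h
    rw [h, hκrec', hξn]
    field_simp
  have hden : ξ n - ((1 + r n) * ξ n - r n) ≠ 0 := by
    intro h
    exact mul_ne_zero hrn hu (by linear_combination h)
  have hP' : P (n + 1) = ((1 + C (r n)) * X - C (β n)) * P n -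
      C (r n) * (X - C (a n)) * (X - C (b n)) * P (n - 1) := by
    have h := hPrec n hn
    rw [hα n hn] at h
    simp only [map_neg, map_add, map_one] at h
    linear_combination h
  refine ⟨?_, ?_, ?_, ?_⟩
  · rw [hS (n + 1) (by omega), hS n hn, hT n hn, hν₁ n hn, hν₂ n hn]
    simp only [Nat.add_sub_cancel]
    rw [hP', hξ'eq]
    apply Polynomial.funext
    intro z
    simp only [eval_mul, eval_add, eval_sub, eval_C, eval_X, eval_one]
    field_simp
    ring
  · rw [hT (n + 1) (by omega), hS n hn, hT n hn, hν₃ n hn, hν₄ n hn]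
    simp only [Nat.add_sub_cancel]
    rw [hP', hξ'eq]
    apply Polynomial.funext
    intro z
    simp only [eval_mul, eval_add, eval_sub, eval_C, eval_X, eval_one]
    field_simp
    ring
  · rw [hν₁ n hn, hν₂ n hn]
    field_simp
    ring
  · rw [hν₃ n hn, hν₄ n hn]
    field_simp
    ring
end

section
/- Assume κ_n ≠ 0 for all n ≥ 0 and κ_n ≠ κ_{n−1} for all n ≥ 1. Then for every n ≥ 1 the polynomial identities (r_n(b_n − a_{n+1}) − ξ_n(β_n + α_n a_{n+1})) · P_n(z) = r_n(1 − ξ_n) · (S_{n+1}(z) − (z − b_n)S_n(z)) and (r_n(a_n − b_{n+1}) − ξ_n(β_n + α_n b_{n+1})) · P_n(z) = r_n(1 − ξ_n) · (T_{n+1}(z) − (z − a_n)T_n(z)) hold. -/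
open Polynomial

/-!
Write `ξ = ξ_n`, `η = ξ_{n+1}`. The recurrence of `κ` gives `ξ η = -(α_n ξ + r_n)`, and with
`α_n = -(1 + r_n)` this becomes `ξ (1 - η) = r_n (1 - ξ)`. Hence
`r_n (1 - ξ) S_{n+1} = ξ (P_{n+1} - η (z - a_{n+1}) P_n)`, and substituting the recurrence for
`P_{n+1}` the `P_{n-1}` terms of `r_n (1 - ξ) (S_{n+1} - (z - b_n) S_n)` cancel. The identity for `T`
is the identity for `S` with `a` and `b` exchanged, which leaves the recurrence of `P` unchanged.
-/

theorem div_mul_div_of_add_add_eq_zero {K : Type*} [Field K] {x y z α r : K}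
    (h : z + α * y + r * x = 0) (hx : x ≠ 0) (hy : y ≠ 0) :
    y / x * (z / y) = -(α * (y / x) + r) := by
  field_simp
  linear_combination h

theorem C_mul_eq_christoffel_sub {K : Type*} [Field K] {ξ η r α β c c' d : K}
    {P₀ P₁ P₂ S₁ S₂ : K[X]}
    (hP : P₂ + (C α * X + C β) * P₁ + C r * (X - C c) * (X - C d) * P₀ = 0)
    (hξη : ξ * η = -(α * ξ + r)) (hα : α = -(1 + r)) (hξ : 1 - ξ ≠ 0) (hη : 1 - η ≠ 0)
    (hS₁ : S₁ = C (1 - ξ)⁻¹ * (P₁ - C ξ * (X - C c) * P₀))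
    (hS₂ : S₂ = C (1 - η)⁻¹ * (P₂ - C η * (X - C c') * P₁)) :
    C (r * (d - c') - ξ * (β + α * c')) * P₁ = C (r * (1 - ξ)) * (S₂ - (X - C d) * S₁) := by
  have hS₁' : C (1 - ξ) * S₁ = P₁ - C ξ * (X - C c) * P₀ := by
    rw [hS₁, ← mul_assoc, ← C_mul, mul_inv_cancel₀ hξ, C_1, one_mul]
  have hS₂' : C (1 - η) * S₂ = P₂ - C η * (X - C c') * P₁ := by
    rw [hS₂, ← mul_assoc, ← C_mul, mul_inv_cancel₀ hη, C_1, one_mul]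
  have hscale : r * (1 - ξ) = ξ * (1 - η) := by linear_combination hξη - ξ * hα
  have hS₂_scaled : C (r * (1 - ξ)) * S₂ = C ξ * (P₂ - C η * (X - C c') * P₁) := by
    rw [hscale, C_mul, mul_assoc, hS₂']
  have hξη' : C ξ * C η = -(C α * C ξ + C r) := by
    rw [← C_mul, hξη, C_neg, C_add, C_mul]
  simp only [C_sub, C_mul, C_add, C_1] at hS₁' hS₂_scaled ⊢
  linear_combination C r * (X - C d) * hS₁' - C ξ * hP + (X - C c') * P₁ * hξη' - hS₂_scaled

theorem stmt5_general (a b β r α κ ξ : ℕ → ℂ) (P S T : ℕ → Polynomial ℂ)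
    (hα : ∀ n, 1 ≤ n → α n = -(1 + r n))
    (hPrec : ∀ n, 1 ≤ n →
      P (n + 1) + (C (α n) * X + C (β n)) * P n +
        C (r n) * (X - C (a n)) * (X - C (b n)) * P (n - 1) = 0)
    (hκrec : ∀ n, 1 ≤ n → κ (n + 1) + α n * κ n + r n * κ (n - 1) = 0)
    (hκ0 : ∀ n, κ n ≠ 0) (hκne : ∀ n, 1 ≤ n → κ n ≠ κ (n - 1))
    (hξ : ∀ n, 1 ≤ n → ξ n = κ n / κ (n - 1))
    (hS : ∀ n, 1 ≤ n →
      S n = C (1 - ξ n)⁻¹ * (P n - C (ξ n) * (X - C (a n)) * P (n - 1)))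
    (hT : ∀ n, 1 ≤ n →
      T n = C (1 - ξ n)⁻¹ * (P n - C (ξ n) * (X - C (b n)) * P (n - 1))) :
    ∀ n, 1 ≤ n →
      C (r n * (b n - a (n + 1)) - ξ n * (β n + α n * a (n + 1))) * P n =
        C (r n * (1 - ξ n)) * (S (n + 1) - (X - C (b n)) * S n) ∧
      C (r n * (a n - b (n + 1)) - ξ n * (β n + α n * b (n + 1))) * P n =
        C (r n * (1 - ξ n)) * (T (n + 1) - (X - C (a n)) * T n) := by
  intro n hn
  have hn' : 1 ≤ n + 1 := by omega
  have hξ_ne : ∀ m, 1 ≤ m → 1 - ξ m ≠ 0 := fun m hm => by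
    rw [hξ m hm, sub_ne_zero, ne_comm, Ne, div_eq_one_iff_eq (hκ0 _)]
    exact hκne m hm
  have hξη : ξ n * ξ (n + 1) = -(α n * ξ n + r n) := by
    rw [hξ n hn, hξ (n + 1) hn', Nat.add_sub_cancel]
    exact div_mul_div_of_add_add_eq_zero (hκrec n hn) (hκ0 _) (hκ0 _)
  have hPrec' : P (n + 1) + (C (α n) * X + C (β n)) * P n +
      C (r n) * (X - C (b n)) * (X - C (a n)) * P (n - 1) = 0 := by
    linear_combination hPrec n hn
  exact ⟨C_mul_eq_christoffel_sub (hPrec n hn) hξη (hα n hn) (hξ_ne n hn) (hξ_ne _ hn')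
      (hS n hn) (by simpa using hS (n + 1) hn'),
    C_mul_eq_christoffel_sub hPrec' hξη (hα n hn) (hξ_ne n hn) (hξ_ne _ hn')
      (hT n hn) (by simpa using hT (n + 1) hn')⟩

/-- Expression of `P_n` in terms of `S_n, S_{n+1}` (resp. `T_n, T_{n+1}`):
cleared-denominator forms of the relations
`P_n = ζ_n^{(1)}(S_{n+1} - (z - b_n) S_n)` and
`P_n = ζ_n^{(2)}(T_{n+1} - (z - a_n) T_n)`. -/
theorem stmt5 (a b β r α κ ξ : ℕ → ℂ) (P S T : ℕ → Polynomial ℂ)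
    (hr : ∀ n, 1 ≤ n → r n ≠ 0)
    (hα0 : α 0 = -1) (hα : ∀ n, 1 ≤ n → α n = -(1 + r n))
    (hP0 : P 0 = 1) (hP1 : P 1 = X - C (β 0))
    (hPrec : ∀ n, 1 ≤ n →
      P (n + 1) + (C (α n) * X + C (β n)) * P n +
        C (r n) * (X - C (a n)) * (X - C (b n)) * P (n - 1) = 0)
    (hκrec : ∀ n, 1 ≤ n → κ (n + 1) + α n * κ n + r n * κ (n - 1) = 0)
    (hκ0 : ∀ n, κ n ≠ 0) (hκne : ∀ n, 1 ≤ n → κ n ≠ κ (n - 1))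
    (hξ : ∀ n, 1 ≤ n → ξ n = κ n / κ (n - 1))
    (hS : ∀ n, 1 ≤ n →
      S n = C (1 - ξ n)⁻¹ * (P n - C (ξ n) * (X - C (a n)) * P (n - 1)))
    (hT : ∀ n, 1 ≤ n →
      T n = C (1 - ξ n)⁻¹ * (P n - C (ξ n) * (X - C (b n)) * P (n - 1))) :
    ∀ n, 1 ≤ n →
      C (r n * (b n - a (n + 1)) - ξ n * (β n + α n * a (n + 1))) * P n =
        C (r n * (1 - ξ n)) * (S (n + 1) - (X - C (b n)) * S n) ∧
      C (r n * (a n - b (n + 1)) - ξ n * (β n + α n * b (n + 1))) * P n =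
        C (r n * (1 - ξ n)) * (T (n + 1) - (X - C (a n)) * T n) :=
  stmt5_general a b β r α κ ξ P S T hα hPrec hκrec hκ0 hκne hξ hS hT
end

section
/- Let σ and μ be finite positive Borel measures on ℝ with support contained in [α,β], with σ(ℝ) > 0, let φ and τ be their Markov functions, and let a⁽¹⁾, a⁽²⁾ ∈ ℝ and b > 0 be such that φ(λ) = −1/(a⁽²⁾λ − a⁽¹⁾ + b²(λ − z)(λ − conj(z))τ(λ)) holds for all λ ∈ ℂ with Im λ > 0, where z ∈ ℂ with Im z > 0. Then a⁽²⁾ = (σ(ℝ))^{−1} + b²·μ(ℝ). -/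
/-!
Along the imaginary axis `w = i y`, `y → ∞`, dominated convergence gives `w φ(w) → -σ(ℝ)` for
every finite measure, hence also `φ(w) → 0`. Dividing the denominator of the functional equation
by `w` therefore tends to `a⁽²⁾ - b² μ(ℝ)`, while the equation identifies the same quotient with
`-1 / (w φ(w)) → σ(ℝ)⁻¹`.
-/

open MeasureTheory Filter Complex Topology Bornology

noncomputable def markov (ν : Measure ℝ) (w : ℂ) : ℂ := ∫ t, 1 / ((t : ℂ) - w) ∂ν

lemma tendsto_div_const_sub_cobounded {𝕜 : Type*} [NormedField 𝕜] (c : 𝕜) :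
    Tendsto (fun w : 𝕜 => w / (c - w)) (cobounded 𝕜) (𝓝 (-1)) := by
  have hlim : Tendsto (fun w : 𝕜 => (c * w⁻¹ - 1)⁻¹) (cobounded 𝕜) (𝓝 (-1)) := by
    simpa using ((tendsto_inv₀_cobounded.const_mul c).sub_const 1).inv₀ (by simp)
  refine hlim.congr' ?_
  filter_upwards [eventually_ne_cobounded 0] with w hw
  rw [← inv_div, sub_div, div_self hw, div_eq_mul_inv]

lemma le_norm_ofReal_sub_I_mul {y : ℝ} (hy : 0 < y) (t : ℝ) : y ≤ ‖(t : ℂ) - I * y‖ := by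
  simpa [abs_of_pos hy] using abs_im_le_norm ((t : ℂ) - I * y)

lemma tendsto_I_mul_cobounded : Tendsto (fun y : ℝ => I * y) atTop (cobounded ℂ) := by
  rw [← tendsto_norm_atTop_iff_cobounded]
  simpa using tendsto_abs_atTop_atTop

lemma tendsto_I_mul_mul_markov (ν : Measure ℝ) [IsFiniteMeasure ν] :
    Tendsto (fun y : ℝ => I * y * markov ν (I * y)) atTop (𝓝 (-(ν Set.univ).toReal)) := by
  have hconst : (-(ν Set.univ).toReal : ℂ) = ∫ _ : ℝ, (-1 : ℂ) ∂ν := by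
    simp [integral_const, measureReal_def]
  simp_rw [markov, ← integral_const_mul, mul_one_div, hconst]
  refine tendsto_integral_filter_of_dominated_convergence (fun _ => 1) ?_ ?_
    (integrable_const 1) ?_
  · filter_upwards [eventually_gt_atTop 0] with y hy
    refine (Continuous.div (by fun_prop) (by fun_prop) fun t ht => ?_).aestronglyMeasurable
    simpa [ht] using (le_norm_ofReal_sub_I_mul hy t).trans_lt' hy
  · filter_upwards [eventually_gt_atTop 0] with y hy
    refine ae_of_all _ fun t => ?_
    rw [norm_div, div_le_one ((le_norm_ofReal_sub_I_mul hy t).trans_lt' hy)]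
    simpa [abs_of_pos hy] using le_norm_ofReal_sub_I_mul hy t
  · exact ae_of_all _ fun t =>
      (tendsto_div_const_sub_cobounded (t : ℂ)).comp tendsto_I_mul_cobounded

lemma tendsto_inv_I_mul : Tendsto (fun y : ℝ => (I * y)⁻¹) atTop (𝓝 0) :=
  tendsto_inv₀_cobounded.comp tendsto_I_mul_cobounded

lemma tendsto_markov_I_mul (ν : Measure ℝ) [IsFiniteMeasure ν] :
    Tendsto (fun y : ℝ => markov ν (I * y)) atTop (𝓝 0) := by
  have hlim : Tendsto (fun y : ℝ => (I * y)⁻¹ * (I * y * markov ν (I * y))) atTop (𝓝 0) := by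
    simpa using tendsto_inv_I_mul.mul (tendsto_I_mul_mul_markov ν)
  refine hlim.congr' ?_
  filter_upwards [tendsto_I_mul_cobounded.eventually_ne_cobounded 0] with y hy
  exact inv_mul_cancel_left₀ hy _

lemma tendsto_linear_add_quadratic_mul_markov_div (μ : Measure ℝ) [IsFiniteMeasure μ]
    (a₁ a₂ c z₁ z₂ : ℂ) :
    Tendsto (fun y : ℝ => (a₂ * (I * y) - a₁ + c * (I * y - z₁) * (I * y - z₂) *
      markov μ (I * y)) / (I * y)) atTop (𝓝 (a₂ - c * (μ Set.univ).toReal)) := by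
  have hlim : Tendsto (fun y : ℝ => a₂ - a₁ * (I * y)⁻¹ + c * ((1 - z₁ * (I * y)⁻¹) *
      (I * y * markov μ (I * y) - z₂ * markov μ (I * y)))) atTop
      (𝓝 (a₂ - c * (μ Set.univ).toReal)) := by
    simpa [sub_eq_add_neg] using ((tendsto_const_nhds (x := a₂)).sub
      (tendsto_inv_I_mul.const_mul a₁)).add ((((tendsto_const_nhds (x := 1)).sub
      (tendsto_inv_I_mul.const_mul z₁)).mul ((tendsto_I_mul_mul_markov μ).sub
      ((tendsto_markov_I_mul μ).const_mul z₂))).const_mul c)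
  refine hlim.congr' ?_
  filter_upwards [tendsto_I_mul_cobounded.eventually_ne_cobounded 0] with y hy
  generalize I * (y : ℂ) = w at hy ⊢
  field_simp

lemma tendsto_div_I_mul_of_markov_eq_neg_one_div (σ : Measure ℝ) [IsFiniteMeasure σ]
    (hpos : 0 < σ Set.univ) (D : ℂ → ℂ) (h : ∀ y : ℝ, 0 < y → markov σ (I * y) = -1 / D (I * y)) :
    Tendsto (fun y : ℝ => D (I * y) / (I * y)) atTop (𝓝 ((σ Set.univ).toReal⁻¹)) := by
  have hS : ((σ Set.univ).toReal : ℂ) ≠ 0 :=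
    ofReal_ne_zero.2 (ENNReal.toReal_pos hpos.ne' (measure_ne_top σ _)).ne'
  have hlim : Tendsto (fun y : ℝ => -(I * y * markov σ (I * y))⁻¹) atTop
      (𝓝 ((σ Set.univ).toReal⁻¹)) := by
    simpa using ((tendsto_I_mul_mul_markov σ).inv₀ (neg_ne_zero.2 hS)).neg
  refine hlim.congr' ?_
  filter_upwards [eventually_gt_atTop 0] with y hy
  -- no `D (I * y) ≠ 0` is needed: both sides vanish when it fails
  rw [h y hy, ← mul_div_assoc, mul_neg_one, neg_div, inv_neg, neg_neg, inv_div]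

theorem stmt8_general (σ μ : Measure ℝ)
    [IsFiniteMeasure σ] [IsFiniteMeasure μ]
    (hpos : 0 < σ Set.univ)
    (z : ℂ) (a₁ a₂ b : ℝ)
    (h : ∀ lam : ℂ, 0 < lam.im →
      (∫ t, 1 / ((t : ℂ) - lam) ∂σ) =
        -1 / ((a₂ : ℂ) * lam - (a₁ : ℂ) +
          (b : ℂ) ^ 2 * (lam - z) * (lam - (starRingEnd ℂ) z) *
            ∫ t, 1 / ((t : ℂ) - lam) ∂μ)) :
    a₂ = ((σ Set.univ).toReal)⁻¹ + b ^ 2 * (μ Set.univ).toReal := by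
  have hσ := tendsto_div_I_mul_of_markov_eq_neg_one_div σ hpos
    (fun w => a₂ * w - a₁ + (b : ℂ) ^ 2 * (w - z) * (w - (starRingEnd ℂ) z) * markov μ w)
    fun y hy => h _ (by simpa using hy)
  have hμ := tendsto_linear_add_quadratic_mul_markov_div μ a₁ a₂ ((b : ℂ) ^ 2) z
    ((starRingEnd ℂ) z)
  have hlim : ((σ Set.univ).toReal⁻¹ : ℂ) = a₂ - (b : ℂ) ^ 2 * (μ Set.univ).toReal :=
    tendsto_nhds_unique hσ hμ
  rw [eq_sub_iff_add_eq] at hlim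
  exact_mod_cast hlim.symm

/-- The relation `a⁽²⁾ = (σ(ℝ))⁻¹ + b²·μ(ℝ)` between the coefficients of one
step of the Schur algorithm and the total masses of the measures involved. -/
theorem stmt8 (α β : ℝ) (hαβ : α ≤ β) (σ μ : Measure ℝ)
    [IsFiniteMeasure σ] [IsFiniteMeasure μ]
    (hσsupp : σ (Set.Icc α β)ᶜ = 0) (hμsupp : μ (Set.Icc α β)ᶜ = 0)
    (hpos : 0 < σ Set.univ)
    (z : ℂ) (hz : 0 < z.im) (a₁ a₂ b : ℝ) (hb : 0 < b)
    (h : ∀ lam : ℂ, 0 < lam.im →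
      (∫ t, 1 / ((t : ℂ) - lam) ∂σ) =
        -1 / ((a₂ : ℂ) * lam - (a₁ : ℂ) +
          (b : ℂ) ^ 2 * (lam - z) * (lam - (starRingEnd ℂ) z) *
            ∫ t, 1 / ((t : ℂ) - lam) ∂μ)) :
    a₂ = ((σ Set.univ).toReal)⁻¹ + b ^ 2 * (μ Set.univ).toReal :=
  stmt8_general σ μ hpos z a₁ a₂ b h
end

section
/- Let σ be a finite positive Borel measure on ℝ with support contained in [α,β] whose support is an infinite set, let z_0, …, z_n ∈ ℂ with Im z_k > 0, and let P be a polynomial with real coefficients of degree exactly n+1 such that ∫ t^j P(t)/∏_{k=0}^{n}|t − z_k|² dσ(t) = 0 for all j = 0, 1, …, n. Then P has n+1 distinct real zeros, all of which lie in the interval [α,β]. -/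
open MeasureTheory

/-- The (topological) support of a Borel measure on `ℝ`: the set of points all
of whose neighbourhoods have positive measure. -/
def measSupport (μ : Measure ℝ) : Set ℝ :=
  {x : ℝ | ∀ U ∈ nhds x, 0 < μ U}

/-!
Suppose `P ≠ 0` is orthogonal to all polynomials of degree `≤ n` with respect to a measure `μ`
carried by `[α, β]` and a continuous weight that is positive there, but has at most `n` distinct
zeros `x` in `[α, β]`. Writing `m x` for their multiplicities, `Q = ∏ (X - x) ^ (m x % 2)` has
degree `≤ n` and makes `Q * P` the square of a polynomial times a factor with no zero, hence of
constant sign, on `[α, β]`. Orthogonality then forces `Q * P` to vanish `μ`-almost everywhere,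
hence on the support of `μ`, which is infinite; so `Q * P = 0`, a contradiction.
-/

open Polynomial Finset Set

section MeasSupport

variable {μ : Measure ℝ}

theorem measure_compl_measSupport : μ (measSupport μ)ᶜ = 0 := by
  refine measure_null_of_locally_null _ fun x hx => ?_
  simp only [measSupport, mem_compl_iff, mem_ofPred_eq, not_forall, not_lt,
    nonpos_iff_eq_zero] at hx
  obtain ⟨U, hU, hU0⟩ := hx
  exact ⟨U, mem_nhdsWithin_of_mem_nhds hU, hU0⟩

theorem ae_mem_of_measSupport_subset {s : Set ℝ} (h : measSupport μ ⊆ s) :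
    ∀ᵐ x ∂μ, x ∈ s :=
  measure_mono_null (compl_subset_compl.mpr h) measure_compl_measSupport

theorem Continuous.eq_zero_on_measSupport {f : ℝ → ℝ} (hf : Continuous f)
    (h : ∀ᵐ x ∂μ, f x = 0) {x : ℝ} (hx : x ∈ measSupport μ) : f x = 0 := by
  by_contra hfx
  have hpos := hx _ ((isOpen_ne_fun hf continuous_const).mem_nhds hfx)
  exact hpos.ne' (ae_iff.mp h)

theorem Polynomial.eq_zero_of_ae_eval_eq_zero (hinf : (measSupport μ).Infinite) {p : ℝ[X]}
    (h : ∀ᵐ t ∂μ, p.eval t = 0) : p = 0 :=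
  p.eq_zero_of_infinite_isRoot <| hinf.mono fun _ hx => p.continuous.eq_zero_on_measSupport h hx

end MeasSupport

theorem Continuous.integrable_of_ae_mem {X E : Type*} [TopologicalSpace X] [T2Space X]
    [MeasurableSpace X] [OpensMeasurableSpace X] [NormedAddCommGroup E] {μ : Measure X}
    [IsFiniteMeasureOnCompacts μ] {K : Set X} {f : X → E} (hK : IsCompact K) (hf : Continuous f)
    (h : ∀ᵐ x ∂μ, x ∈ K) : Integrable f μ := by
  rw [← Measure.restrict_eq_self_of_ae_mem h]
  exact hf.continuousOn.integrableOn_compact hK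

theorem integral_eval_mul_eq_zero {μ : Measure ℝ} {f : ℝ → ℝ} {n : ℕ}
    (hint : ∀ j ≤ n, Integrable (fun t => t ^ j * f t) μ)
    (horth : ∀ j ≤ n, ∫ t, t ^ j * f t ∂μ = 0) {Q : ℝ[X]} (hQ : Q.natDegree ≤ n) :
    ∫ t, Q.eval t * f t ∂μ = 0 := by
  have hsum : (fun t => Q.eval t * f t) =
      fun t => ∑ j ∈ range (n + 1), Q.coeff j * (t ^ j * f t) := by
    funext t
    rw [eval_eq_sum_range' (Nat.lt_succ_of_le hQ), sum_mul]
    simp only [mul_assoc]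
  have hj : ∀ j ∈ range (n + 1), j ≤ n := fun j hj => Nat.lt_succ_iff.mp (mem_range.mp hj)
  rw [hsum, integral_finsetSum _ fun j hj' => (hint j (hj j hj')).const_mul _]
  exact sum_eq_zero fun j hj' => by rw [integral_const_mul, horth j (hj j hj'), mul_zero]

theorem IsPreconnected.forall_pos_or_forall_neg {s : Set ℝ} (hs : IsPreconnected s)
    {f : ℝ → ℝ} (hf : ContinuousOn f s) (h0 : ∀ x ∈ s, f x ≠ 0) :
    (∀ x ∈ s, 0 < f x) ∨ (∀ x ∈ s, f x < 0) := by
  by_contra! ⟨⟨a, ha, hfa⟩, ⟨b, hb, hfb⟩⟩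
  obtain ⟨c, hc, hfc⟩ := hs.intermediate_value ha hb hf ⟨hfa, hfb⟩
  exact h0 c hc hfc

theorem prod_pow_mul_prod_pow_mod_two {ι M : Type*} [CommMonoid M] (T : Finset ι) (f : ι → M)
    (m : ι → ℕ) :
    (∏ x ∈ T, f x ^ m x) * ∏ x ∈ T, f x ^ (m x % 2) =
      (∏ x ∈ T, f x ^ ((m x + 1) / 2)) ^ 2 := by
  rw [← prod_mul_distrib, ← Finset.prod_pow]
  refine prod_congr rfl fun x _ => ?_
  rw [← pow_add, ← pow_mul]
  congr 1
  omega

theorem Polynomial.exists_eq_prod_pow_rootMultiplicity_mul {K : Type*} [Field K] {P : K[X]}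
    (hP : P ≠ 0) (T : Finset K) :
    ∃ U : K[X], P = (∏ x ∈ T, (X - C x) ^ P.rootMultiplicity x) * U ∧
      ∀ x ∈ T, ¬ U.IsRoot x := by
  have hcop : (T : Set K).Pairwise
      (Function.onFun IsCoprime fun x => (X - C x) ^ P.rootMultiplicity x) :=
    fun x _ y _ hxy => (pairwise_coprime_X_sub_C Function.injective_id hxy).pow
  obtain ⟨U, hPU⟩ := prod_dvd_of_coprime hcop fun x _ => P.pow_rootMultiplicity_dvd x
  refine ⟨U, hPU, fun x hx hUx => ?_⟩
  have hdvd : (X - C x) ^ (P.rootMultiplicity x + 1) ∣ P := by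
    conv_rhs => rw [hPU]
    rw [pow_succ]
    exact mul_dvd_mul (dvd_prod_of_mem (fun y => (X - C y) ^ P.rootMultiplicity y) hx)
      (dvd_iff_isRoot.mpr hUx)
  have := (le_rootMultiplicity_iff hP).mpr hdvd
  omega

theorem Polynomial.exists_natDegree_le_card_mul_nonneg {s : Set ℝ} (hs : IsPreconnected s)
    {P : ℝ[X]} (hP : P ≠ 0) {T : Finset ℝ} (hT : ∀ x ∈ s, P.IsRoot x → x ∈ T) :
    ∃ Q : ℝ[X], Q ≠ 0 ∧ Q.natDegree ≤ #T ∧ ∀ x ∈ s, 0 ≤ (Q * P).eval x := by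
  obtain ⟨U, hPU, hU⟩ := exists_eq_prod_pow_rootMultiplicity_mul hP T
  have hUs : ∀ x ∈ s, U.eval x ≠ 0 := fun x hx hUx =>
    hU x (hT x hx (by rw [IsRoot, hPU, eval_mul, hUx, mul_zero])) hUx
  obtain ⟨c, hc0, hcU⟩ : ∃ c : ℝ, c ≠ 0 ∧ ∀ x ∈ s, 0 < c * U.eval x := by
    rcases hs.forall_pos_or_forall_neg U.continuous.continuousOn hUs with hpos | hneg
    · exact ⟨1, one_ne_zero, fun x hx => by simpa using hpos x hx⟩
    · exact ⟨-1, by norm_num, fun x hx => by simpa using hneg x hx⟩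
  set Q := ∏ x ∈ T, (X - C x) ^ (P.rootMultiplicity x % 2)
  set B := ∏ x ∈ T, (X - C x) ^ ((P.rootMultiplicity x + 1) / 2)
  have hQP : C c * Q * P = C c * B ^ 2 * U := by
    rw [hPU, ← prod_pow_mul_prod_pow_mod_two]
    ring
  have hQdeg : Q.natDegree ≤ #T := by
    refine (natDegree_prod_le _ _).trans ?_
    refine (sum_le_sum (g := fun _ => 1) fun x _ => ?_).trans_eq (by simp)
    rw [natDegree_pow, natDegree_X_sub_C, mul_one]
    omega
  refine ⟨C c * Q, mul_ne_zero (C_ne_zero.mpr hc0) ?_, (natDegree_C_mul_le _ _).trans hQdeg,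
    fun x hx => ?_⟩
  · exact prod_ne_zero_iff.mpr fun x _ => pow_ne_zero _ (X_sub_C_ne_zero x)
  · rw [hQP, eval_mul, eval_mul, eval_C, eval_pow, mul_comm c, mul_assoc]
    exact mul_nonneg (sq_nonneg _) (hcU x hx).le

theorem Polynomial.eq_zero_of_integral_eval_mul_eq_zero {μ : Measure ℝ} [IsFiniteMeasure μ]
    {K : Set ℝ} (hK : IsCompact K) (hsupp : measSupport μ ⊆ K)
    (hinf : (measSupport μ).Infinite)
    {v : ℝ → ℝ} (hv : Continuous v) (hvpos : ∀ t ∈ K, 0 < v t) {R : ℝ[X]}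
    (hR : ∀ t ∈ K, 0 ≤ R.eval t) (h : ∫ t, R.eval t * v t ∂μ = 0) : R = 0 := by
  have hae : ∀ᵐ t ∂μ, t ∈ K := ae_mem_of_measSupport_subset hsupp
  have hnn : 0 ≤ᵐ[μ] fun t => R.eval t * v t := by
    filter_upwards [hae] with t ht using mul_nonneg (hR t ht) (hvpos t ht).le
  have hzero := (integral_eq_zero_iff_of_nonneg_ae hnn
    ((R.continuous.mul hv).integrable_of_ae_mem hK hae)).mp h
  refine eq_zero_of_ae_eval_eq_zero hinf ?_
  filter_upwards [hzero, hae] with t ht htK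
  exact (mul_eq_zero.mp ht).resolve_right (hvpos t htK).ne'

theorem Polynomial.lt_card_of_orthogonal {μ : Measure ℝ} [IsFiniteMeasure μ] {α β : ℝ}
    (hsupp : measSupport μ ⊆ Icc α β) (hinf : (measSupport μ).Infinite) {v : ℝ → ℝ}
    (hv : Continuous v) (hvpos : ∀ t ∈ Icc α β, 0 < v t) {P : ℝ[X]} (hP : P ≠ 0) {n : ℕ}
    (horth : ∀ j ≤ n, ∫ t, t ^ j * P.eval t * v t ∂μ = 0) {T : Finset ℝ}
    (hT : ∀ x ∈ Icc α β, P.IsRoot x → x ∈ T) : n < #T := by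
  by_contra! hTn
  obtain ⟨Q, hQ0, hQdeg, hQP⟩ := exists_natDegree_le_card_mul_nonneg isPreconnected_Icc hP hT
  have hint : ∀ j ≤ n, Integrable (fun t => t ^ j * (P.eval t * v t)) μ := fun j _ =>
    ((continuous_pow j).mul (P.continuous.mul hv)).integrable_of_ae_mem isCompact_Icc
      (ae_mem_of_measSupport_subset hsupp)
  have hQorth := integral_eval_mul_eq_zero hint
    (fun j hj => by simpa only [mul_assoc] using horth j hj) (hQdeg.trans hTn)
  simp only [← mul_assoc, ← eval_mul] at hQorth
  exact mul_ne_zero hQ0 hP <|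
    eq_zero_of_integral_eval_mul_eq_zero isCompact_Icc hsupp hinf hv hvpos hQP hQorth

theorem prod_normSq_ofReal_sub_pos {ι : Type*} (s : Finset ι) {z : ι → ℂ}
    (hz : ∀ k, (z k).im ≠ 0) (t : ℝ) : 0 < ∏ k ∈ s, Complex.normSq ((t : ℂ) - z k) :=
  prod_pos fun k _ => Complex.normSq_pos.mpr fun h => hz k (by simpa using congrArg Complex.im h)

theorem stmt9_general (α β : ℝ) (σ : Measure ℝ) [IsFiniteMeasure σ]
    (hsupp : measSupport σ ⊆ Set.Icc α β) (hinf : (measSupport σ).Infinite)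
    (n : ℕ) (z : Fin (n + 1) → ℂ) (hz : ∀ k, 0 < (z k).im)
    (P : Polynomial ℝ) (hdeg : P.degree = (n + 1 : ℕ))
    (horth : ∀ j : ℕ, j ≤ n →
      (∫ t, t ^ j * P.eval t /
        ∏ k : Fin (n + 1), Complex.normSq ((t : ℂ) - z k) ∂σ) = 0) :
    ∃ s : Finset ℝ, s.card = n + 1 ∧ ∀ x ∈ s, x ∈ Set.Icc α β ∧ P.eval x = 0 := by
  have hP : P ≠ 0 := by
    rintro rfl
    exact WithBot.bot_ne_coe hdeg
  have hpos := prod_normSq_ofReal_sub_pos univ fun k => (hz k).ne'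
  have hcont : Continuous fun t : ℝ => (∏ k, Complex.normSq ((t : ℂ) - z k))⁻¹ :=
    (continuous_finsetProd _ fun k _ => by fun_prop).inv₀ fun t => (hpos t).ne'
  set T := P.roots.toFinset.filter (· ∈ Set.Icc α β)
  have hmemT : ∀ x, x ∈ T ↔ x ∈ Set.Icc α β ∧ P.IsRoot x := fun x => by
    simp only [T, mem_filter, Multiset.mem_toFinset, mem_roots hP, and_comm]
  have hT : n < #T := lt_card_of_orthogonal hsupp hinf hcont (fun t _ => inv_pos.mpr (hpos t)) hP
    (by simpa only [div_eq_mul_inv] using horth) fun x hx hroot => (hmemT x).mpr ⟨hx, hroot⟩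
  obtain ⟨s, hsT, hs⟩ := exists_subset_card_eq hT
  exact ⟨s, hs, fun x hx => (hmemT x).mp (hsT hx)⟩

/-- The polynomials orthogonal with respect to the varying weights
`dσ(t)/∏|t - z_k|²` have all their zeros simple, real, and located in `[α, β]`. -/
theorem stmt9 (α β : ℝ) (hαβ : α ≤ β) (σ : Measure ℝ) [IsFiniteMeasure σ]
    (hsupp : measSupport σ ⊆ Set.Icc α β) (hinf : (measSupport σ).Infinite)
    (n : ℕ) (z : Fin (n + 1) → ℂ) (hz : ∀ k, 0 < (z k).im)
    (P : Polynomial ℝ) (hdeg : P.degree = (n + 1 : ℕ))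
    (horth : ∀ j : ℕ, j ≤ n →
      (∫ t, t ^ j * P.eval t /
        ∏ k : Fin (n + 1), Complex.normSq ((t : ℂ) - z k) ∂σ) = 0) :
    ∃ s : Finset ℝ, s.card = n + 1 ∧ ∀ x ∈ s, x ∈ Set.Icc α β ∧ P.eval x = 0 :=
  stmt9_general α β σ hsupp hinf n z hz P hdeg horth
end

section
/- Let 0 ≤ j < n and let λ ∈ ℂ be such that both J1_{[j,n]} − λ J2_{[j,n]} and J1_{[j+1,n]} − λ J2_{[j+1,n]} are invertible. Then m_{[j,n]}(λ) = −1/(a_j^{(2)}λ − a_j^{(1)} + b_j²(λ − z_j)(λ − conj(z_j)) · m_{[j+1,n]}(λ)); in particular the denominator on the right-hand side is nonzero. -/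
/-- The tridiagonal block `J1_{[j,n]}` with rows/columns indexed by `j, …, n`
(realized on `Fin (n - j + 1)` via `l = j + p`): diagonal entries `a⁽¹⁾_l`,
subdiagonal entries `z_l b_l` and superdiagonal entries `conj(z_l) b_l`. -/
noncomputable def J1blk (a₁ b : ℕ → ℝ) (z : ℕ → ℂ) (j n : ℕ) :
    Matrix (Fin (n - j + 1)) (Fin (n - j + 1)) ℂ :=
  Matrix.of fun p q =>
    if j + (p : ℕ) = j + (q : ℕ) then ((a₁ (j + (p : ℕ)) : ℝ) : ℂ)
    else if j + (p : ℕ) + 1 = j + (q : ℕ) then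
      (starRingEnd ℂ) (z (j + (p : ℕ))) * (b (j + (p : ℕ)) : ℂ)
    else if j + (q : ℕ) + 1 = j + (p : ℕ) then
      z (j + (q : ℕ)) * (b (j + (q : ℕ)) : ℂ)
    else 0

/-- The symmetric tridiagonal block `J2_{[j,n]}` with rows/columns indexed by
`j, …, n`: diagonal entries `a⁽²⁾_l`, subdiagonal and superdiagonal entries `b_l`. -/
noncomputable def J2blk (a₂ b : ℕ → ℝ) (j n : ℕ) :
    Matrix (Fin (n - j + 1)) (Fin (n - j + 1)) ℂ :=
  Matrix.of fun p q =>
    if j + (p : ℕ) = j + (q : ℕ) then ((a₂ (j + (p : ℕ)) : ℝ) : ℂ)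
    else if j + (p : ℕ) + 1 = j + (q : ℕ) then ((b (j + (p : ℕ)) : ℝ) : ℂ)
    else if j + (q : ℕ) + 1 = j + (p : ℕ) then ((b (j + (q : ℕ)) : ℝ) : ℂ)
    else 0

/-- The `m`-function of the linear pencil `J1_{[j,n]} - λ J2_{[j,n]}`: the
top-left entry of the inverse matrix. -/
noncomputable def mfun (a₁ a₂ b : ℕ → ℝ) (z : ℕ → ℂ) (j n : ℕ) (lam : ℂ) : ℂ :=
  (J1blk a₁ b z j n - lam • J2blk a₂ b j n)⁻¹ 0 0

open Matrix

private lemma det_expand_aux {m : ℕ} (A : Matrix (Fin (m+2)) (Fin (m+2)) ℂ)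
    (h0 : ∀ q : Fin (m+2), 2 ≤ (q:ℕ) → A 0 q = 0)
    (hc : ∀ p : Fin (m+2), 2 ≤ (p:ℕ) → A p 0 = 0) :
    A.det = A 0 0 * (A.submatrix Fin.succ Fin.succ).det
      - A 0 1 * A 1 0 *
        (A.submatrix (Fin.succ ∘ Fin.succ) (Fin.succ ∘ Fin.succ)).det := by
  have h01 : ((1 : Fin (m+2)).succAbove (0 : Fin (m+1))) = 0 := by
    rw [Fin.succAbove_of_castSucc_lt]
    · simp
    · simp [Fin.lt_def]
  have hcomp : (1 : Fin (m+2)).succAbove ∘ Fin.succ = Fin.succ ∘ Fin.succ := by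
    funext q
    simp only [Function.comp_apply]
    rw [Fin.succAbove_of_le_castSucc]
    simp [Fin.le_def]
  have hDdet : (A.submatrix Fin.succ ((1 : Fin (m+2)).succAbove)).det
      = A 1 0 * (A.submatrix (Fin.succ ∘ Fin.succ) (Fin.succ ∘ Fin.succ)).det := by
    rw [Matrix.det_succ_column_zero, Fin.sum_univ_succ]
    have htail : ∀ i : Fin m,
        (A.submatrix Fin.succ ((1 : Fin (m+2)).succAbove)) i.succ 0 = 0 := by
      intro i
      simp only [Matrix.submatrix_apply, h01]
      exact hc _ (by simp)
    rw [Finset.sum_eq_zero (fun i _ => by rw [htail i]; ring)]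
    simp only [Matrix.submatrix_apply, h01, Fin.val_zero, pow_zero, one_mul,
      Matrix.submatrix_submatrix, add_zero, Fin.succ_zero_eq_one, Fin.succAbove_zero, hcomp]
  rw [Matrix.det_succ_row_zero, Fin.sum_univ_succ, Fin.sum_univ_succ]
  have htail : ∀ q : Fin m, A 0 q.succ.succ = 0 := fun q => h0 _ (by simp)
  rw [Finset.sum_eq_zero (fun q _ => by rw [htail q]; ring)]
  simp only [Fin.val_zero, pow_zero, one_mul, Fin.succAbove_zero, Fin.succ_zero_eq_one,
    Fin.val_one, pow_one, add_zero]
  rw [hDdet]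
  ring

private lemma inv_zz {k : ℕ} (A : Matrix (Fin (k+1)) (Fin (k+1)) ℂ) :
    A⁻¹ 0 0 = (A.submatrix Fin.succ Fin.succ).det / A.det := by
  rw [Matrix.inv_def, Matrix.smul_apply, Matrix.adjugate_fin_succ_eq_det_submatrix]
  simp [Ring.inverse_eq_inv', Fin.succAbove_zero, div_eq_mul_inv, mul_comm]

private lemma key {m : ℕ} (A : Matrix (Fin (m+2)) (Fin (m+2)) ℂ)
    (h0 : ∀ q : Fin (m+2), 2 ≤ (q:ℕ) → A 0 q = 0)
    (hc : ∀ p : Fin (m+2), 2 ≤ (p:ℕ) → A p 0 = 0)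
    (hA : IsUnit A.det) (hB : IsUnit (A.submatrix Fin.succ Fin.succ).det) :
    (A 0 0 - A 0 1 * A 1 0 * (A.submatrix Fin.succ Fin.succ)⁻¹ 0 0) ≠ 0 ∧
    A⁻¹ 0 0 = 1 / (A 0 0 - A 0 1 * A 1 0 * (A.submatrix Fin.succ Fin.succ)⁻¹ 0 0) := by
  have hdA : A.det ≠ 0 := by simpa [isUnit_iff_ne_zero] using hA
  have hdB : (A.submatrix Fin.succ Fin.succ).det ≠ 0 := by
    simpa [isUnit_iff_ne_zero] using hB
  have hBinv : (A.submatrix Fin.succ Fin.succ)⁻¹ 0 0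
      = (A.submatrix (Fin.succ ∘ Fin.succ) (Fin.succ ∘ Fin.succ)).det
        / (A.submatrix Fin.succ Fin.succ).det := by
    rw [inv_zz, Matrix.submatrix_submatrix]
  have hdet := det_expand_aux A h0 hc
  have hX : A 0 0 - A 0 1 * A 1 0 * (A.submatrix Fin.succ Fin.succ)⁻¹ 0 0
      = A.det / (A.submatrix Fin.succ Fin.succ).det := by
    rw [hBinv, hdet]
    field_simp
  refine ⟨by rw [hX]; exact div_ne_zero hdA hdB, ?_⟩
  rw [inv_zz A, hX, one_div_div]

/-- The Riccati-type relation between consecutive `m`-functions of the linear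
pencil. -/
theorem stmt13 (n : ℕ) (a₁ a₂ b : ℕ → ℝ) (z : ℕ → ℂ)
    (hb : ∀ l, l ≤ n → 0 < b l) (hz : ∀ l, l ≤ n → 0 < (z l).im)
    (j : ℕ) (hj : j < n) (lam : ℂ)
    (h₁ : IsUnit (J1blk a₁ b z j n - lam • J2blk a₂ b j n).det)
    (h₂ : IsUnit (J1blk a₁ b z (j + 1) n - lam • J2blk a₂ b (j + 1) n).det) :
    ((a₂ j : ℂ) * lam - (a₁ j : ℂ) +
        (b j : ℂ) ^ 2 * (lam - z j) * (lam - (starRingEnd ℂ) (z j)) *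
          mfun a₁ a₂ b z (j + 1) n lam) ≠ 0 ∧
      mfun a₁ a₂ b z j n lam =
        -1 / ((a₂ j : ℂ) * lam - (a₁ j : ℂ) +
          (b j : ℂ) ^ 2 * (lam - z j) * (lam - (starRingEnd ℂ) (z j)) *
            mfun a₁ a₂ b z (j + 1) n lam) := by
  have hdim : n - (j + 1) + 2 = n - j + 1 := by omega
  set A0 : Matrix (Fin (n - j + 1)) (Fin (n - j + 1)) ℂ :=
    J1blk a₁ b z j n - lam • J2blk a₂ b j n with hA0
  set A1 : Matrix (Fin (n - (j + 1) + 1)) (Fin (n - (j + 1) + 1)) ℂ :=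
    J1blk a₁ b z (j + 1) n - lam • J2blk a₂ b (j + 1) n with hA1
  set e : Fin (n - (j + 1) + 2) ≃ Fin (n - j + 1) := finCongr hdim with he
  set A : Matrix (Fin (n - (j + 1) + 2)) (Fin (n - (j + 1) + 2)) ℂ :=
    A0.submatrix e e with hA
  have hentry : ∀ p q : Fin (n - (j + 1) + 2), A p q =
      ((if j + (p : ℕ) = j + (q : ℕ) then ((a₁ (j + (p : ℕ)) : ℝ) : ℂ)
        else if j + (p : ℕ) + 1 = j + (q : ℕ) then
          (starRingEnd ℂ) (z (j + (p : ℕ))) * (b (j + (p : ℕ)) : ℂ)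
        else if j + (q : ℕ) + 1 = j + (p : ℕ) then
          z (j + (q : ℕ)) * (b (j + (q : ℕ)) : ℂ)
        else 0)
      - lam * (if j + (p : ℕ) = j + (q : ℕ) then ((a₂ (j + (p : ℕ)) : ℝ) : ℂ)
        else if j + (p : ℕ) + 1 = j + (q : ℕ) then ((b (j + (p : ℕ)) : ℝ) : ℂ)
        else if j + (q : ℕ) + 1 = j + (p : ℕ) then ((b (j + (q : ℕ)) : ℝ) : ℂ)
        else 0)) := by
    intro p q
    simp [hA, hA0, he, J1blk, J2blk, Matrix.sub_apply, Matrix.smul_apply,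
      Matrix.submatrix_apply, finCongr_apply, Fin.coe_cast, smul_eq_mul]
  have h0 : ∀ q : Fin (n - (j + 1) + 2), 2 ≤ (q : ℕ) → A 0 q = 0 := by
    intro q hq
    rw [hentry]
    have c1 : j + ((0 : Fin (n - (j + 1) + 2)) : ℕ) ≠ j + (q : ℕ) := by
      simp only [Fin.val_zero]; omega
    have c2 : j + ((0 : Fin (n - (j + 1) + 2)) : ℕ) + 1 ≠ j + (q : ℕ) := by
      simp only [Fin.val_zero]; omega
    have c3 : j + (q : ℕ) + 1 ≠ j + ((0 : Fin (n - (j + 1) + 2)) : ℕ) := by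
      simp only [Fin.val_zero]; omega
    rw [if_neg c1, if_neg c2, if_neg c3, if_neg c1, if_neg c2, if_neg c3]
    ring
  have hcc : ∀ p : Fin (n - (j + 1) + 2), 2 ≤ (p : ℕ) → A p 0 = 0 := by
    intro p hp
    rw [hentry]
    have c1 : j + (p : ℕ) ≠ j + ((0 : Fin (n - (j + 1) + 2)) : ℕ) := by
      simp only [Fin.val_zero]; omega
    have c2 : j + (p : ℕ) + 1 ≠ j + ((0 : Fin (n - (j + 1) + 2)) : ℕ) := by
      simp only [Fin.val_zero]; omega
    have c3 : j + ((0 : Fin (n - (j + 1) + 2)) : ℕ) + 1 ≠ j + (p : ℕ) := by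
      simp only [Fin.val_zero]; omega
    rw [if_neg c1, if_neg c2, if_neg c3, if_neg c1, if_neg c2, if_neg c3]
    ring
  have hBeq : A.submatrix Fin.succ Fin.succ = A1 := by
    ext p q
    rw [Matrix.submatrix_apply, hentry]
    simp only [Fin.val_succ]
    have e1 : j + ((p : ℕ) + 1) = j + 1 + (p : ℕ) := by omega
    have e2 : j + ((q : ℕ) + 1) = j + 1 + (q : ℕ) := by omega
    rw [e1, e2]
    simp [hA1, J1blk, J2blk, Matrix.sub_apply, Matrix.smul_apply, smul_eq_mul]
  have hright : A * (A0⁻¹.submatrix e e) = 1 := by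
    rw [hA, Matrix.submatrix_mul_equiv, Matrix.mul_nonsing_inv _ h₁,
      Matrix.submatrix_one_equiv]
  have hAinv : A⁻¹ = A0⁻¹.submatrix e e := Matrix.inv_eq_right_inv hright
  have he0 : e 0 = 0 := by
    apply Fin.ext
    simp [he]
  have hinv00 : A⁻¹ 0 0 = A0⁻¹ 0 0 := by
    rw [hAinv, Matrix.submatrix_apply, he0]
  have hdetA : A.det = A0.det := Matrix.det_submatrix_equiv_self e A0
  have hAu : IsUnit A.det := by rw [hdetA]; exact h₁
  have hBu : IsUnit (A.submatrix Fin.succ Fin.succ).det := by rw [hBeq]; exact h₂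
  obtain ⟨hne, heq⟩ := key A h0 hcc hAu hBu
  have hA00 : A 0 0 = (a₁ j : ℂ) - lam * (a₂ j : ℂ) := by
    rw [hentry]
    simp
  have hA01 : A 0 1 = (starRingEnd ℂ) (z j) * (b j : ℂ) - lam * (b j : ℂ) := by
    rw [hentry]
    norm_num
  have hA10 : A 1 0 = z j * (b j : ℂ) - lam * (b j : ℂ) := by
    rw [hentry]
    have c : j + 1 + 1 ≠ j := by omega
    norm_num [c]
  have hM : mfun a₁ a₂ b z (j + 1) n lam = (A.submatrix Fin.succ Fin.succ)⁻¹ 0 0 := by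
    rw [hBeq]; rfl
  have hD : ((a₂ j : ℂ) * lam - (a₁ j : ℂ) +
        (b j : ℂ) ^ 2 * (lam - z j) * (lam - (starRingEnd ℂ) (z j)) *
          mfun a₁ a₂ b z (j + 1) n lam)
      = -(A 0 0 - A 0 1 * A 1 0 * (A.submatrix Fin.succ Fin.succ)⁻¹ 0 0) := by
    rw [hM, hA00, hA01, hA10]
    ring
  refine ⟨by rw [hD]; exact neg_ne_zero.mpr hne, ?_⟩
  have hmj : mfun a₁ a₂ b z j n lam = A⁻¹ 0 0 := hinv00.symm
  rw [hmj, hD, neg_div_neg_eq, heq]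
end

section
/- Let J1 be a Hermitian (n+1)×(n+1) complex matrix and let J2 be a Hermitian positive-definite (n+1)×(n+1) complex matrix. Then for every λ ∈ ℂ with Im λ > 0 the matrix J1 − λJ2 is invertible and the top-left entry m(λ) = ((J1 − λJ2)^{-1} e_0, e_0) of its inverse satisfies Im m(λ) ≥ 0. -/
open scoped ComplexOrder

open Matrix

lemma herm_quad_im {m : Type*} [Fintype m] {A : Matrix m m ℂ} (hA : A.IsHermitian)
    (x : m → ℂ) : (star x ⬝ᵥ A *ᵥ x).im = 0 := by
  rw [← Complex.conj_eq_iff_im]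
  have : star (star x ⬝ᵥ A *ᵥ x) = star x ⬝ᵥ A *ᵥ x := by
    rw [← star_dotProduct, star_mulVec, hA.eq, ← dotProduct_mulVec]
  exact this

lemma quad_expand {m : Type*} [Fintype m] (J1 J2 : Matrix m m ℂ) (lam : ℂ) (x : m → ℂ) :
    star x ⬝ᵥ (J1 - lam • J2) *ᵥ x =
      star x ⬝ᵥ J1 *ᵥ x - lam * (star x ⬝ᵥ J2 *ᵥ x) := by
  rw [sub_mulVec, dotProduct_sub, smul_mulVec, dotProduct_smul, smul_eq_mul]

lemma quad_im {m : Type*} [Fintype m] {J1 J2 : Matrix m m ℂ} (h1 : J1.IsHermitian)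
    (h2 : J2.IsHermitian) (lam : ℂ) (x : m → ℂ) :
    (star x ⬝ᵥ (J1 - lam • J2) *ᵥ x).im = -lam.im * (star x ⬝ᵥ J2 *ᵥ x).re := by
  rw [quad_expand]
  simp only [Complex.sub_im, Complex.mul_im, herm_quad_im h1, herm_quad_im h2]
  ring

/-- For a Hermitian `J1` and a Hermitian positive-definite `J2`, the pencil
`J1 - λJ2` is invertible for `Im λ > 0` and its `m`-function (the top-left
entry of the inverse) has nonnegative imaginary part, i.e. it is a Nevanlinna
function. -/
theorem stmt14 (n : ℕ) (J1 J2 : Matrix (Fin (n + 1)) (Fin (n + 1)) ℂ)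
    (h1 : J1.IsHermitian) (h2 : J2.PosDef) :
    ∀ lam : ℂ, 0 < lam.im →
      IsUnit (J1 - lam • J2).det ∧ 0 ≤ ((J1 - lam • J2)⁻¹ 0 0).im := by
  intro lam hlam
  set A := J1 - lam • J2 with hA
  have hdet : A.det ≠ 0 := by
    intro h0
    obtain ⟨v, hv, hAv⟩ := (Matrix.exists_mulVec_eq_zero_iff).2 h0
    have h := quad_im h1 h2.isHermitian lam v
    rw [hAv] at h
    simp only [dotProduct_zero, Complex.zero_im] at h
    have hpos : 0 < (star v ⬝ᵥ J2 *ᵥ v).re := by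
      have := h2.re_dotProduct_pos hv
      simpa [RCLike.re] using this
    nlinarith
  refine ⟨isUnit_iff_ne_zero.2 hdet, ?_⟩
  set u : Fin (n + 1) → ℂ := A⁻¹ *ᵥ Pi.single 0 1 with hu
  have hAu : A *ᵥ u = Pi.single 0 1 := by
    rw [hu, mulVec_mulVec, Matrix.mul_nonsing_inv _ (isUnit_iff_ne_zero.2 hdet), one_mulVec]
  have hm : A⁻¹ 0 0 = u 0 := by
    simp [hu, mulVec, dotProduct, Pi.single_apply]
  have hs : star u ⬝ᵥ A *ᵥ u = (starRingEnd ℂ) (u 0) := by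
    rw [hAu]
    simp [dotProduct, Pi.single_apply]
  have him := quad_im h1 h2.isHermitian lam u
  rw [hs] at him
  have hnn : 0 ≤ (star u ⬝ᵥ J2 *ᵥ u).re := by
    have := h2.posSemidef.re_dotProduct_nonneg u
    simpa [RCLike.re] using this
  rw [hm]
  have : -(u 0).im = -lam.im * (star u ⬝ᵥ J2 *ᵥ u).re := by
    simpa [Complex.conj_im] using him
  nlinarith
end

section
/- The matrix J2 is invertible and the (0,0) entry ((J2)^{-1} e_0, e_0) of its inverse is a real number t with 0 < t ≤ 1. -/
/-!
Write `J2 = Uᵀ U`, where `U` is the `(n+2)×(n+1)` real matrix whose `j`-th column is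
`e_j + b_j e_{j+1}`, so that `U x = (x₀, x₁ + b₀ x₀, …, x_n + b_{n-1} x_{n-1}, b_n x_n)`.
This map is injective (solve for `x₀, x₁, …` in turn), hence `J2` is positive definite.
For `x = J2⁻¹ e₀` one has `x₀ = ⟪J2 x, x⟫ = ‖U x‖² ≥ (U x)₀² = x₀²`, and `x₀ > 0`,
so `0 < (J2⁻¹)₀₀ ≤ 1`.
-/

open Matrix

/-- The `(n+1)×(n+1)` symmetric tridiagonal matrix with diagonal entries
`1 + b_j²` and subdiagonal and superdiagonal entries `b_0, …, b_{n-1}`, viewed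
as a complex matrix. -/
noncomputable def J2mat (n : ℕ) (b : Fin (n + 1) → ℝ) :
    Matrix (Fin (n + 1)) (Fin (n + 1)) ℂ :=
  Matrix.of fun i j =>
    if i = j then ((1 + b i ^ 2 : ℝ) : ℂ)
    else if (i : ℕ) + 1 = (j : ℕ) then ((b i : ℝ) : ℂ)
    else if (j : ℕ) + 1 = (i : ℕ) then ((b j : ℝ) : ℂ)
    else 0

theorem Matrix.inv_map_of_isUnit_det {R S ι : Type*} [CommRing R] [CommRing S] [Fintype ι]
    [DecidableEq ι] (f : R →+* S) {M : Matrix ι ι R} (hM : IsUnit M.det) :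
    (M.map f)⁻¹ = M⁻¹.map f :=
  inv_eq_right_inv <| by
    rw [← Matrix.map_mul, mul_nonsing_inv M hM, Matrix.map_one f f.map_zero f.map_one]

theorem Matrix.sq_mulVec_apply_le {m n : Type*} [Fintype m] [Fintype n] (A : Matrix m n ℝ)
    (x : n → ℝ) (k : m) : (A *ᵥ x) k ^ 2 ≤ x ⬝ᵥ (Aᴴ * A) *ᵥ x := by
  rw [← mulVec_mulVec, dotProduct_mulVec, conjTranspose_eq_transpose_of_trivial,
    vecMul_transpose, sq]
  exact Finset.single_le_sum (fun k _ => mul_self_nonneg ((A *ᵥ x) k)) (Finset.mem_univ k)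

theorem Matrix.PosDef.inv_apply_self_le_one {ι : Type*} [Fintype ι] [DecidableEq ι]
    {M : Matrix ι ι ℝ} (hM : M.PosDef) (i : ι) (hq : ∀ x, x i ^ 2 ≤ x ⬝ᵥ M *ᵥ x) :
    M⁻¹ i i ≤ 1 := by
  set x := M⁻¹ *ᵥ Pi.single i 1
  have hxi : x i = M⁻¹ i i := by simp [x]
  have hquad : x ⬝ᵥ M *ᵥ x = x i := by
    rw [mulVec_mulVec, mul_nonsing_inv M hM.det_pos.ne'.isUnit, one_mulVec, dotProduct_single,
      mul_one]
  have hsq : M⁻¹ i i ^ 2 ≤ M⁻¹ i i := by simpa only [hquad, hxi] using hq x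
  nlinarith [hM.inv.diag_pos (i := i)]

noncomputable def J2factor {n : ℕ} (b : Fin (n + 1) → ℝ) :
    Matrix (Fin (n + 2)) (Fin (n + 1)) ℝ :=
  of fun k j => (Pi.single j.castSucc 1 + Pi.single j.succ (b j) : Fin (n + 2) → ℝ) k

section J2factor

variable {n : ℕ} (b : Fin (n + 1) → ℝ)

theorem J2factor_mulVec_zero (x : Fin (n + 1) → ℝ) : (J2factor b *ᵥ x) 0 = x 0 := by
  have hzero : ∀ j : Fin (n + 1), (0 : Fin (n + 2)) = j.castSucc ↔ j = 0 :=
    fun j => eq_comm.trans Fin.castSucc_eq_zero_iff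
  simp [J2factor, mulVec, dotProduct, Pi.single_apply, hzero, (Fin.succ_ne_zero _).symm]

theorem J2factor_mulVec_castSucc_succ (x : Fin (n + 1) → ℝ) (i : Fin n) :
    (J2factor b *ᵥ x) i.castSucc.succ = x i.succ + b i.castSucc * x i.castSucc := by
  have hrow : ∀ j : Fin (n + 1), i.castSucc.succ = j.castSucc ↔ j = i.succ := fun j => by
    rw [Fin.succ_castSucc, Fin.castSucc_inj, eq_comm]
  simp [J2factor, mulVec, dotProduct, Pi.single_apply, add_mul, Finset.sum_add_distrib, hrow]

theorem J2factor_mulVec_injective : Function.Injective (J2factor b).mulVec := by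
  refine (injective_iff_map_eq_zero (mulVecLin (J2factor b))).2 fun x hx => funext fun j => ?_
  have hcoord (k : Fin (n + 2)) : (J2factor b *ᵥ x) k = 0 := congrFun hx k
  induction j using Fin.induction with
  | zero => simpa only [J2factor_mulVec_zero, Pi.zero_apply] using hcoord 0
  | succ i ih => simpa [J2factor_mulVec_castSucc_succ, ih] using hcoord i.castSucc.succ

theorem J2mat_eq_map : J2mat n b = ((J2factor b)ᴴ * J2factor b).map Complex.ofRealHom := by
  ext i j
  have hentry : ((J2factor b)ᴴ * J2factor b) i j =
      (Pi.single i.castSucc 1 + Pi.single i.succ (b i)) ⬝ᵥ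
        (Pi.single j.castSucc 1 + Pi.single j.succ (b j) : Fin (n + 2) → ℝ) := rfl
  have hcross : ∀ i j : Fin (n + 1), i.castSucc = j.succ ↔ (i : ℕ) = j + 1 := fun i j => by
    simp [Fin.ext_iff]
  simp only [map_apply, hentry, dotProduct_add, add_dotProduct, single_dotProduct,
    Pi.single_apply, Fin.castSucc_inj, Fin.succ_inj, eq_comm (a := Fin.succ i), hcross, J2mat,
    of_apply, Complex.ofRealHom_eq_coe]
  split_ifs <;> subst_vars <;> first | omega | (push_cast; ring)

end J2factor

theorem stmt16_general (n : ℕ) (b : Fin (n + 1) → ℝ) :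
    IsUnit (J2mat n b).det ∧
      ∃ t : ℝ, (J2mat n b)⁻¹ 0 0 = (t : ℂ) ∧ 0 < t ∧ t ≤ 1 := by
  set M := (J2factor b)ᴴ * J2factor b
  have hM : M.PosDef := .conjTranspose_mul_self _ (J2factor_mulVec_injective b)
  have hdet : IsUnit M.det := hM.det_pos.ne'.isUnit
  have hle : M⁻¹ 0 0 ≤ 1 := hM.inv_apply_self_le_one 0 fun x => by
    simpa only [J2factor_mulVec_zero] using sq_mulVec_apply_le (J2factor b) x 0
  rw [J2mat_eq_map]
  refine ⟨?_, M⁻¹ 0 0, ?_, hM.inv.diag_pos, hle⟩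
  · rw [← RingHom.mapMatrix_apply, ← RingHom.map_det]
    exact hdet.map _
  · rw [inv_map_of_isUnit_det _ hdet]
    rfl

/-- `J2` is invertible and the `(0,0)` entry of its inverse is a real number
lying in `(0, 1]`. -/
theorem stmt16 (n : ℕ) (b : Fin (n + 1) → ℝ) (hb : ∀ j, 0 < b j) :
    IsUnit (J2mat n b).det ∧
      ∃ t : ℝ, (J2mat n b)⁻¹ 0 0 = (t : ℂ) ∧ 0 < t ∧ t ≤ 1 :=
  stmt16_general n b
end

section
/- Let σ be a finite positive Borel measure on ℝ with support contained in [α,β] and σ(ℝ) > 0, and let φ be its Markov function. Let δ > 0 and let {z_k}_{k≥0} be pairwise distinct complex numbers with Im z_k > δ for all k. For each n ≥ 0, let σ_n be a finite positive Borel measure on ℝ with support contained in [α,β], set R_n(λ) = ∫ dσ_n(t)/(t − λ), and assume that sup_n σ_n(ℝ) < ∞ and that R_n(z_k) = φ(z_k) for all 0 ≤ k ≤ n. Then R_n converges to φ uniformly on every compact subset of ℂ ∖ [α,β]. -/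
/-!
Integration against `σₙ` and `σ` gives bounded functionals `Λₙ`, `Φ` on the Banach algebra
`C([α, β], ℂ)`, and `Rₙ(λ) = -Λₙ((λ - t)⁻¹)`, `φ(λ) = -Φ((λ - t)⁻¹)`: both are functionals
applied to the resolvent of the coordinate function `t`, whose spectrum is `[α, β]`.
By Banach–Alaoglu the `Λₙ` have weak-* cluster points, and every cluster point agrees with `Φ`
on the resolvents at all `zₖ`. The `zₖ` form an infinite set that stays in `{Im ≥ δ}`, so it
accumulates at a point of `ℂ ∖ [α, β]` or at `∞`, where the resolvent is analytic as well;
by the identity theorem every cluster point agrees with `Φ` on all resolvents. Hence `Rₙ → φ`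
pointwise, and the convergence is uniform on compacta because the `Λₙ` are equicontinuous.
-/

open MeasureTheory Filter Set Topology Bornology

theorem AnalyticOnNhd.eqOn_zero_of_infinite_of_isBounded {𝕜 E : Type*}
    [NontriviallyNormedField 𝕜] [ProperSpace 𝕜] [NormedAddCommGroup E] [NormedSpace 𝕜 E]
    {f : 𝕜 → E} {U S : Set 𝕜} (hf : AnalyticOnNhd 𝕜 f U) (hU : IsPreconnected U)
    (hS : S.Infinite) (hSb : IsBounded S) (hSU : closure S ⊆ U) (hfS : EqOn f 0 S) :
    EqOn f 0 U := by
  obtain ⟨c, hc, hacc⟩ :=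
    hS.exists_accPt_of_subset_isCompact hSb.isCompact_closure subset_closure
  exact hf.eqOn_zero_of_preconnected_of_frequently_eq_zero hU (hSU hc)
    ((accPt_iff_frequently_nhdsNE.mp hacc).mono hfS)

theorem ContinuousLinearMap.tendstoUniformlyOn_of_norm_le_of_tendsto {𝕜 E F ι : Type*}
    [NontriviallyNormedField 𝕜] [SeminormedAddCommGroup E] [NormedSpace 𝕜 E]
    [SeminormedAddCommGroup F] [NormedSpace 𝕜 F] {T : ι → E →L[𝕜] F} {C : ℝ}
    (hT : ∀ i, ‖T i‖ ≤ C) {p : Filter ι} {f : E → F} {K : Set E} (hK : IsCompact K)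
    (h : ∀ x ∈ K, Tendsto (fun i => T i x) p (𝓝 (f x))) :
    TendstoUniformlyOn (fun i => ⇑(T i)) f p K := by
  have heq : Equicontinuous (fun i => ⇑(T i)) :=
    ((NormedSpace.equicontinuous_TFAE T).out 5 1).mp (⟨C, hT⟩ : ∃ C, ∀ i, ‖T i‖ ≤ C)
  have hunif := (EquicontinuousOn.tendsto_uniformOnFun_iff_pi' (𝔖 := {K}) (by simpa)
    (by simpa using heq.equicontinuousOn K) p f).mpr ?_
  · exact UniformOnFun.tendsto_iff_tendstoUniformlyOn.mp hunif K rfl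
  rw [tendsto_pi_nhds]
  rintro ⟨x, hx⟩
  exact h x (by simpa using hx)

namespace spectrum

theorem resolvent_inv {𝕜 A : Type*} [NontriviallyNormedField 𝕜] [NormedRing A]
    [NormedAlgebra 𝕜 A] (a : A) {w : 𝕜} (hw : w ≠ 0) :
    resolvent a w⁻¹ = w • Ring.inverse (1 - w • a) := by
  lift w to 𝕜ˣ using hw.isUnit
  simpa [resolvent, Units.smul_def, smul_smul] using
    congr(w • $(units_smul_resolvent_self (r := w⁻¹) (a := a)))

variable {A E : Type*} [NormedRing A] [NormedAlgebra ℂ A] [CompleteSpace A]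
  [NormedAddCommGroup E] [NormedSpace ℂ E]

theorem analyticOnNhd_resolvent (a : A) : AnalyticOnNhd ℂ (resolvent a) (resolventSet ℂ a) :=
  DifferentiableOn.analyticOnNhd
    (fun _ hk => (hasDerivAt_resolvent_const_left hk).differentiableAt.differentiableWithinAt)
    (isOpen_resolventSet a)

theorem eventually_cobounded_apply_resolvent_eq_zero {a : A} (L : A →L[ℂ] E)
    (h : ∃ᶠ z in cobounded ℂ, L (resolvent a z) = 0) :
    ∀ᶠ z in cobounded ℂ, L (resolvent a z) = 0 := by
  -- `g w = L (resolvent a w⁻¹)` for `w ≠ 0`, and the Neumann series makes `g` analytic at `0`.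
  set g : ℂ → E := fun w => L (w • Ring.inverse (1 - w • a))
  set B := Metric.eball (0 : ℂ) (‖a‖₊ : ENNReal)⁻¹
  have hB0 : B ∈ 𝓝 0 := Metric.eball_mem_nhds 0 (ENNReal.inv_pos.mpr ENNReal.coe_ne_top)
  have hg : AnalyticOnNhd ℂ g B := fun w hw =>
    L.analyticAt _ |>.comp (analyticAt_id.smul
      ((hasFPowerSeriesOnBall_inverse_one_sub_smul ℂ a).analyticAt_of_mem hw))
  have hg_inv : ∀ᶠ z in cobounded ℂ, g z⁻¹ = L (resolvent a z) := by
    filter_upwards [isBounded_singleton (x := (0 : ℂ))] with z hz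
    simp only [g, ← resolvent_inv a (inv_ne_zero hz), inv_inv]
  have hfreq : ∃ᶠ w in 𝓝[≠] 0, g w = 0 :=
    tendsto_inv₀_cobounded'.frequently (h.mp (hg_inv.mono fun z hz hz' => hz.trans hz'))
  have hgB : EqOn g 0 B := hg.eqOn_zero_of_preconnected_of_frequently_eq_zero
    (convex_eball 0 _).isPreconnected (mem_of_mem_nhds hB0) hfreq
  filter_upwards [hg_inv, tendsto_inv₀_cobounded.eventually hB0] with z hz hzB
  rw [← hz, hgB hzB, Pi.zero_apply]

theorem apply_resolvent_eqOn_zero_of_infinite {a : A} (L : A →L[ℂ] E)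
    (ha : IsPreconnected (resolventSet ℂ a)) {S : Set ℂ} (hS : S.Infinite)
    (hSa : closure S ⊆ resolventSet ℂ a) (hLS : ∀ z ∈ S, L (resolvent a z) = 0) :
    EqOn (fun z => L (resolvent a z)) 0 (resolventSet ℂ a) := by
  have hf : AnalyticOnNhd ℂ (fun z => L (resolvent a z)) (resolventSet ℂ a) :=
    fun z hz => L.analyticAt _ |>.comp (analyticOnNhd_resolvent a z hz)
  by_cases hSb : IsBounded S
  · exact hf.eqOn_zero_of_infinite_of_isBounded ha hS hSb hSa hLS
  have hfreq : ∃ᶠ z in cobounded ℂ, L (resolvent a z) = 0 := Frequently.mono hSb hLS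
  obtain ⟨R, -, hR⟩ := hasBasis_cobounded_norm.eventually_iff.mp
    ((eventually_cobounded_apply_resolvent_eq_zero L hfreq).and (spectrum.isBounded a))
  have hR1 : R < ‖((R + 1 : ℝ) : ℂ)‖ := by
    rw [Complex.norm_real, Real.norm_eq_abs]
    exact (lt_add_one R).trans_le (le_abs_self _)
  refine hf.eqOn_zero_of_preconnected_of_eventuallyEq_zero ha
    (notMem_compl_iff.mp (hR hR1.le).2) ?_
  filter_upwards [continuous_norm.continuousAt.eventually (eventually_ge_nhds hR1)] with z hz
  exact (hR hz).1

theorem tendsto_apply_resolvent_of_interpolation {a : A}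
    (ha : IsPreconnected (resolventSet ℂ a)) {Λ : ℕ → StrongDual ℂ A} {C : ℝ}
    (hΛ : ∀ n, ‖Λ n‖ ≤ C) (Φ : StrongDual ℂ A) {z : ℕ → ℂ} (hz : Function.Injective z)
    (hza : closure (range z) ⊆ resolventSet ℂ a)
    (hinterp : ∀ n k, k ≤ n → Λ n (resolvent a (z k)) = Φ (resolvent a (z k)))
    {w : ℂ} (hw : w ∈ resolventSet ℂ a) :
    Tendsto (fun n => Λ n (resolvent a w)) atTop (𝓝 (Φ (resolvent a w))) := by
  set T : Set (WeakDual ℂ A) :=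
    {Λ₀ | ∀ w ∈ resolventSet ℂ a, Λ₀ (resolvent a w) = Φ (resolvent a w)}
  have hcluster : ∀ Λ₀, MapClusterPt Λ₀ atTop (fun n => StrongDual.toWeakDual (Λ n)) →
      Λ₀ ∈ T := by
    intro Λ₀ hΛ₀ w hw
    have hzk : ∀ k, Λ₀ (resolvent a (z k)) = Φ (resolvent a (z k)) := fun k =>
      (isClosed_eq (WeakDual.eval_continuous _) continuous_const).mem_of_mapClusterPt hΛ₀
        ((eventually_ge_atTop k).mono fun n hn => hinterp n k hn)
    have := apply_resolvent_eqOn_zero_of_infinite (WeakDual.toStrongDual Λ₀ - Φ) ha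
      (infinite_range_of_injective hz) hza (by rintro _ ⟨k, rfl⟩; simp [hzk k]) hw
    simpa [sub_eq_zero] using this
  have hT : Tendsto (fun n => StrongDual.toWeakDual (Λ n)) atTop (𝓝ˢ T) :=
    (WeakDual.isCompact_closedBall 0 C).tendsto_nhdsSet_of_mapClusterPt
      (Eventually.of_forall fun n => by simpa using hΛ n) fun Λ₀ _ => hcluster Λ₀
  rw [← nhdsSet_singleton]
  exact ((WeakDual.eval_continuous (resolvent a w)).tendsto_nhdsSet (s := T)
    (t := {Φ (resolvent a w)}) fun Λ₀ hΛ₀ => hΛ₀ w hw).comp hT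

theorem tendstoUniformlyOn_resolvent_of_interpolation {a : A}
    (ha : IsPreconnected (resolventSet ℂ a)) {Λ : ℕ → StrongDual ℂ A} {C : ℝ}
    (hΛ : ∀ n, ‖Λ n‖ ≤ C) (Φ : StrongDual ℂ A) {z : ℕ → ℂ} (hz : Function.Injective z)
    (hza : closure (range z) ⊆ resolventSet ℂ a)
    (hinterp : ∀ n k, k ≤ n → Λ n (resolvent a (z k)) = Φ (resolvent a (z k)))
    {K : Set ℂ} (hK : IsCompact K) (hKa : K ⊆ resolventSet ℂ a) :
    TendstoUniformlyOn (fun n w => Λ n (resolvent a w)) (fun w => Φ (resolvent a w)) atTop K := by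
  have hKr : IsCompact (resolvent a '' K) :=
    hK.image_of_continuousOn ((analyticOnNhd_resolvent a).continuousOn.mono hKa)
  refine ((ContinuousLinearMap.tendstoUniformlyOn_of_norm_le_of_tendsto hΛ hKr ?_).comp
    (resolvent a)).mono (subset_preimage_image _ _)
  rintro _ ⟨w, hw, rfl⟩
  exact tendsto_apply_resolvent_of_interpolation ha hΛ Φ hz hza hinterp (hKa hw)

end spectrum

namespace ContinuousMap

theorem resolvent_apply {X 𝕜 : Type*} [TopologicalSpace X] [NormedField 𝕜] {f : C(X, 𝕜)}
    {w : 𝕜} (hw : w ∈ resolventSet 𝕜 f) (x : X) : resolvent f w x = (w - f x)⁻¹ := by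
  rw [spectrum.resolvent_eq hw]
  refine eq_inv_of_mul_eq_one_left ?_
  simpa [hw.unit_spec] using congr($(hw.unit.inv_mul) x)

variable {X : Type*} [TopologicalSpace X] [CompactSpace X] [MeasurableSpace X]
  [OpensMeasurableSpace X] (μ : Measure X) [IsFiniteMeasure μ] {𝕜 : Type*} [RCLike 𝕜]

theorem integrable_of_compactSpace (f : C(X, 𝕜)) : Integrable f μ :=
  ⟨f.continuous.aestronglyMeasurable, .of_bounded (ae_of_all μ f.norm_coe_le_norm)⟩

noncomputable def integralCLM : C(X, 𝕜) →L[𝕜] 𝕜 :=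
  LinearMap.mkContinuous
    { toFun f := ∫ x, f x ∂μ
      map_add' f g :=
        integral_add (f.integrable_of_compactSpace μ) (g.integrable_of_compactSpace μ)
      map_smul' c f := integral_const_mul c _ }
    (μ.real univ) fun f => by
      simpa [mul_comm] using norm_integral_le_of_norm_le_const (ae_of_all μ f.norm_coe_le_norm)

theorem integralCLM_apply (f : C(X, 𝕜)) : integralCLM μ f = ∫ x, f x ∂μ := rfl

theorem norm_integralCLM_le : ‖(integralCLM μ : C(X, 𝕜) →L[𝕜] 𝕜)‖ ≤ μ.real univ :=
  LinearMap.mkContinuous_norm_le _ measureReal_nonneg _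

end ContinuousMap

theorem ContinuousMap.norm_integralCLM_comap_le {α 𝕜 : Type*} [TopologicalSpace α]
    [MeasurableSpace α] [OpensMeasurableSpace α] [RCLike 𝕜] {s : Set α} [CompactSpace s]
    (hs : MeasurableSet s) (μ : Measure α) [IsFiniteMeasure μ] :
    ‖(integralCLM (μ.comap (Subtype.val : s → α)) : C(s, 𝕜) →L[𝕜] 𝕜)‖ ≤ μ.real univ := by
  refine (norm_integralCLM_le _).trans ?_
  rw [measureReal_def, measureReal_def, (MeasurableEmbedding.subtype_coe hs).comap_apply]
  exact ENNReal.toReal_mono (measure_ne_top μ _) (measure_mono (subset_univ _))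

namespace Complex

def ofRealOn (s : Set ℝ) : C(s, ℂ) := ⟨fun t => ((t : ℝ) : ℂ), by fun_prop⟩

@[simp]
theorem ofRealOn_apply {s : Set ℝ} (t : s) : ofRealOn s t = (t : ℂ) := rfl

theorem resolventSet_ofRealOn (s : Set ℝ) : resolventSet ℂ (ofRealOn s) = (ofReal '' s)ᶜ := by
  rw [← compl_compl (resolventSet ℂ _), ← spectrum, ContinuousMap.spectrum_eq_range]
  ext; simp [ofRealOn]

theorem isPreconnected_compl_ofReal_image_Icc (α β : ℝ) :
    IsPreconnected (ofReal '' Icc α β)ᶜ := by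
  have hU : (ofReal '' Icc α β)ᶜ =
      ({w | w.re < α} ∪ {w | 0 < w.im}) ∪ ({w | β < w.re} ∪ {w | w.im < 0}) := by
    ext w
    simp only [mem_compl_iff, mem_image, mem_Icc, mem_union, mem_ofPred_eq, not_exists, not_and]
    constructor
    · intro h
      by_contra! hw
      exact h w.re ⟨hw.1.1, hw.2.1⟩ (Complex.ext rfl (by rw [ofReal_im]; linarith [hw.1.2, hw.2.2]))
    · rintro hw x ⟨hαx, hxβ⟩ rfl
      simp only [ofReal_re, ofReal_im, lt_irrefl, or_false] at hw
      rcases hw with hw | hw <;> linarith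
  rw [hU]
  refine .union ((β + 1 : ℝ) + I) (by simp) (by simp) ?_ ?_
  · exact .union ((α - 1 : ℝ) + I) (by simp) (by simp) (convex_halfSpace_re_lt α).isPreconnected
      (convex_halfSpace_im_gt 0).isPreconnected
  · exact .union ((β + 1 : ℝ) - I) (by simp) (by simp) (convex_halfSpace_re_gt β).isPreconnected
      (convex_halfSpace_im_lt 0).isPreconnected

theorem closure_subset_compl_ofReal_image {S : Set ℂ} {δ : ℝ} (hδ : 0 < δ)
    (hS : ∀ w ∈ S, δ < w.im) (s : Set ℝ) : closure S ⊆ (ofReal '' s)ᶜ := by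
  refine (closure_minimal (t := {w : ℂ | δ ≤ w.im}) (fun w hw => (hS w hw).le)
    (isClosed_le continuous_const continuous_im)).trans ?_
  rintro w hw ⟨t, -, rfl⟩
  simp only [mem_ofPred_eq, ofReal_im] at hw
  linarith

end Complex

theorem MeasureTheory.integral_one_div_ofReal_sub_eq {s : Set ℝ} [CompactSpace s]
    (hs : MeasurableSet s) {μ : Measure ℝ} [IsFiniteMeasure μ] (hμ : μ sᶜ = 0) {w : ℂ}
    (hw : w ∈ resolventSet ℂ (Complex.ofRealOn s)) :
    ∫ t, 1 / ((t : ℂ) - w) ∂μ =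
      -ContinuousMap.integralCLM (μ.comap Subtype.val) (resolvent (Complex.ofRealOn s) w) := by
  rw [ContinuousMap.integralCLM_apply, ← integral_neg]
  simp_rw [ContinuousMap.resolvent_apply hw, Complex.ofRealOn_apply]
  rw [integral_subtype_comap hs (fun t : ℝ => -(w - t)⁻¹),
    Measure.restrict_eq_self_of_ae_mem (ae_iff.mpr hμ)]
  simp_rw [one_div, ← inv_neg, neg_sub]

theorem stmt19_general (α β : ℝ) (σ : Measure ℝ) [IsFiniteMeasure σ]
    (hsupp : σ (Set.Icc α β)ᶜ = 0)
    (δ : ℝ) (hδ : 0 < δ) (z : ℕ → ℂ) (hzinj : Function.Injective z)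
    (hz : ∀ k, δ < (z k).im)
    (σn : ℕ → Measure ℝ) (hfin : ∀ n, IsFiniteMeasure (σn n))
    (hsuppn : ∀ n, σn n (Set.Icc α β)ᶜ = 0)
    (C : ℝ) (hC : ∀ n, (σn n Set.univ).toReal ≤ C)
    (hinterp : ∀ n k, k ≤ n →
      (∫ t, 1 / ((t : ℂ) - z k) ∂(σn n)) = ∫ t, 1 / ((t : ℂ) - z k) ∂σ) :
    ∀ K : Set ℂ, IsCompact K → K ⊆ ((fun x : ℝ => (x : ℂ)) '' Set.Icc α β)ᶜ →
      TendstoUniformlyOn (fun n lam => ∫ t, 1 / ((t : ℂ) - lam) ∂(σn n))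
        (fun lam => ∫ t, 1 / ((t : ℂ) - lam) ∂σ) Filter.atTop K := by
  intro K hK hKU
  have := hfin
  set a := Complex.ofRealOn (Icc α β)
  have hρ : resolventSet ℂ a = _ := Complex.resolventSet_ofRealOn (Icc α β)
  have hza : closure (range z) ⊆ resolventSet ℂ a :=
    hρ ▸ Complex.closure_subset_compl_ofReal_image hδ (forall_mem_range.2 hz) _
  have hKa : K ⊆ resolventSet ℂ a := hρ ▸ hKU
  have hpc : IsPreconnected (resolventSet ℂ a) :=
    hρ ▸ Complex.isPreconnected_compl_ofReal_image_Icc α β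
  have hΛ : ∀ n, ‖(ContinuousMap.integralCLM ((σn n).comap Subtype.val) :
      StrongDual ℂ C(Icc α β, ℂ))‖ ≤ C :=
    fun n => (ContinuousMap.norm_integralCLM_comap_le measurableSet_Icc _).trans (hC n)
  have key := spectrum.tendstoUniformlyOn_resolvent_of_interpolation hpc hΛ
    (ContinuousMap.integralCLM (σ.comap Subtype.val)) hzinj hza
    (fun n k hk => by
      have hzk := hza (subset_closure (mem_range_self k))
      rw [← neg_inj, ← integral_one_div_ofReal_sub_eq measurableSet_Icc (hsuppn n) hzk,
        ← integral_one_div_ofReal_sub_eq measurableSet_Icc hsupp hzk]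
      exact hinterp n k hk)
    hK hKa
  refine key.neg.congr (.of_forall fun n w hw => ?_) |>.congr_right fun w hw => ?_
  · exact (integral_one_div_ofReal_sub_eq measurableSet_Icc (hsuppn n) (hKa hw)).symm
  · exact (integral_one_div_ofReal_sub_eq measurableSet_Icc hsupp (hKa hw)).symm

/-- Markov-type convergence theorem for multipoint Padé approximants: if the
Markov functions `R_n` of uniformly bounded measures supported in `[α, β]`
interpolate the Markov function `φ` at the points `z_0, …, z_n` (pairwise
distinct, with imaginary parts bounded below by `δ > 0`), then `R_n → φ`
locally uniformly in `ℂ ∖ [α, β]`. -/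
theorem stmt19 (α β : ℝ) (hαβ : α ≤ β) (σ : Measure ℝ) [IsFiniteMeasure σ]
    (hsupp : σ (Set.Icc α β)ᶜ = 0) (hpos : 0 < σ Set.univ)
    (δ : ℝ) (hδ : 0 < δ) (z : ℕ → ℂ) (hzinj : Function.Injective z)
    (hz : ∀ k, δ < (z k).im)
    (σn : ℕ → Measure ℝ) (hfin : ∀ n, IsFiniteMeasure (σn n))
    (hsuppn : ∀ n, σn n (Set.Icc α β)ᶜ = 0)
    (C : ℝ) (hC : ∀ n, (σn n Set.univ).toReal ≤ C)
    (hinterp : ∀ n k, k ≤ n →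
      (∫ t, 1 / ((t : ℂ) - z k) ∂(σn n)) = ∫ t, 1 / ((t : ℂ) - z k) ∂σ) :
    ∀ K : Set ℂ, IsCompact K → K ⊆ ((fun x : ℝ => (x : ℂ)) '' Set.Icc α β)ᶜ →
      TendstoUniformlyOn (fun n lam => ∫ t, 1 / ((t : ℂ) - lam) ∂(σn n))
        (fun lam => ∫ t, 1 / ((t : ℂ) - lam) ∂σ) Filter.atTop K :=
  stmt19_general α β σ hsupp δ hδ z hzinj hz σn hfin hsuppn C hC hinterp
end
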